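/- arXiv:2505.13530 — 9 statements merged into one kernel-verified Lean document; each statement's English description precedes it below -/
import Mathlib

section
/- Let ι and κ be countable index types, d : ι → ℕ and e : κ → ℕ with e j ≥ 1 for all j, and let λ : ι → ℝ and σ : κ → ℝ be nonnegative functions. Let m, n, M ≥ 0 be reals and suppose T i j : EuclideanSpace ℂ (Fin (e j)) →L[ℂ] EuclideanSpace ℂ (Fin (d i)) is a family of operators with ‖T i j‖ ≤ M (1 + λ i)^(−m/2) (1 + σ j)^(−n/2) for all i, j. Assume S₁ := Σ_i (1 + λ i)^(−m) < ∞ and S₂ := Σ_j (e j) (1 + σ j)^(−n) < ∞. Then there exists a bounded linear operator A : H(e) → H(d) such that (A x) i = Σ_j T i j (x j) for every x ∈ H(e) and every i, and ‖A‖ ≤ √(S₁ S₂) · M. -/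
open scoped ENNReal

noncomputable section

/-- The Hilbert space `H(d)` of square-summable families. -/
abbrev Hsp {α : Type*} (d : α → ℕ) : Type _ :=
  lp (fun i => EuclideanSpace ℂ (Fin (d i))) 2

/-- The canonical isometric inclusion (extension by zero) `ι_j : ℂ^{d j} → H(d)`. -/
def lpIncl {α : Type*} (d : α → ℕ) (j : α) :
    EuclideanSpace ℂ (Fin (d j)) →L[ℂ] Hsp d :=
  letI := Classical.decEq α
  LinearMap.mkContinuous
    { toFun := fun v => lp.single 2 j v
      map_add' := by
        intro a b
        apply Subtype.ext
        funext k
        simp only [lp.coeFn_add, Pi.add_apply]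
        by_cases h : k = j
        · subst h
          simp only [lp.single_apply_self]
        · simp only [lp.single_apply_ne _ _ _ h, add_zero]
      map_smul' := by
        intro c a
        simp only [RingHom.id_apply]
        exact lp.single_smul (E := fun i => EuclideanSpace ℂ (Fin (d i))) 2 j c a }
    1 (fun v => by
      rw [one_mul]
      have h := lp.norm_single (p := 2) (E := fun i => EuclideanSpace ℂ (Fin (d i)))
        (by norm_num)
        j v
      simpa using h.le)

/-- The canonical coordinate projection `P_i : H(d) → ℂ^{d i}`. -/
def lpProj {α : Type*} (d : α → ℕ) (i : α) :
    Hsp d →L[ℂ] EuclideanSpace ℂ (Fin (d i)) :=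
  LinearMap.mkContinuous
    { toFun := fun f => f i
      map_add' := fun f g => by simp only [lp.coeFn_add, Pi.add_apply]
      map_smul' := fun c f => by simp only [lp.coeFn_smul, Pi.smul_apply, RingHom.id_apply]
      }
    1 (fun f => by rw [one_mul]; exact lp.norm_apply_le_norm two_ne_zero f i)

end

set_option maxHeartbeats 1000000 in
/-- Schur estimate / upper bound in the Boundedness Criterion:
a block operator whose blocks decay polynomially extends to a bounded operator
with the stated norm bound. -/
theorem schur_block_boundedness
    {ι κ : Type*} [Countable ι] [Countable κ]
    (d : ι → ℕ) (e : κ → ℕ) (he : ∀ j, 1 ≤ e j)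
    (lam : ι → ℝ) (sig : κ → ℝ) (hlam : ∀ i, 0 ≤ lam i) (hsig : ∀ j, 0 ≤ sig j)
    (m n M : ℝ) (hm : 0 ≤ m) (hn : 0 ≤ n) (hM : 0 ≤ M)
    (T : ∀ (i : ι) (j : κ), EuclideanSpace ℂ (Fin (e j)) →L[ℂ] EuclideanSpace ℂ (Fin (d i)))
    (hT : ∀ i j, ‖T i j‖ ≤ M * (1 + lam i) ^ (-m / 2) * (1 + sig j) ^ (-n / 2))
    (S₁ S₂ : ℝ)
    (hS₁ : HasSum (fun i : ι => (1 + lam i) ^ (-m)) S₁)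
    (hS₂ : HasSum (fun j : κ => (e j : ℝ) * (1 + sig j) ^ (-n)) S₂) :
    ∃ A : Hsp e →L[ℂ] Hsp d,
      (∀ (x : Hsp e) (i : ι), (A x) i = ∑' j : κ, T i j (x j)) ∧
      ‖A‖ ≤ Real.sqrt (S₁ * S₂) * M := by
  classical
  -- basic quantities
  set a : ι → ℝ := fun i => (1 + lam i) ^ (-m / 2) with ha_def
  set c : κ → ℝ := fun j => (1 + sig j) ^ (-n / 2) with hc_def
  have hposl : ∀ i, (0:ℝ) < 1 + lam i := fun i => by linarith [hlam i]
  have hposs : ∀ j, (0:ℝ) < 1 + sig j := fun j => by linarith [hsig j]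
  have ha_nonneg : ∀ i, 0 ≤ a i := fun i => Real.rpow_nonneg (hposl i).le _
  have hc_nonneg : ∀ j, 0 ≤ c j := fun j => Real.rpow_nonneg (hposs j).le _
  have ha2 : ∀ i, a i ^ 2 = (1 + lam i) ^ (-m) := by
    intro i
    rw [sq, ha_def, ← Real.rpow_add (hposl i)]
    norm_num
  have hc2 : ∀ j, c j ^ 2 = (1 + sig j) ^ (-n) := by
    intro j
    rw [sq, hc_def, ← Real.rpow_add (hposs j)]
    norm_num
  have hS₁' : HasSum (fun i => a i ^ 2) S₁ := by simpa [ha2] using hS₁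
  have hS₁nonneg : 0 ≤ S₁ := hasSum_le (fun i => sq_nonneg (a i)) hasSum_zero hS₁'
  have hc2_le : ∀ j, c j ^ 2 ≤ (e j : ℝ) * (1 + sig j) ^ (-n) := by
    intro j
    rw [hc2]
    have h1 : (1:ℝ) ≤ (e j : ℝ) := by exact_mod_cast he j
    nlinarith [Real.rpow_nonneg (hposs j).le (-n)]
  have hc2_sum : Summable (fun j => c j ^ 2) :=
    Summable.of_nonneg_of_le (fun j => sq_nonneg _) hc2_le hS₂.summable
  set C₂ : ℝ := ∑' j, c j ^ 2 with hC₂_def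
  have hC₂_nonneg : 0 ≤ C₂ := tsum_nonneg fun j => sq_nonneg _
  have hC₂_le : C₂ ≤ S₂ := by
    rw [← hS₂.tsum_eq]
    exact Summable.tsum_le_tsum hc2_le hc2_sum hS₂.summable
  have hS₂nonneg : 0 ≤ S₂ := hC₂_nonneg.trans hC₂_le
  have h2 : ((2:ℝ≥0∞)).toReal = (2:ℝ) := by norm_num
  have h2pos : 0 < ((2:ℝ≥0∞)).toReal := by rw [h2]; norm_num
  -- pointwise block bound
  have hblock : ∀ (x : Hsp e) (i : ι) (j : κ),
      ‖T i j (x j)‖ ≤ (M * a i) * (c j * ‖x j‖) := by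
    intro x i j
    calc ‖T i j (x j)‖ ≤ ‖T i j‖ * ‖x j‖ := (T i j).le_opNorm _
      _ ≤ (M * a i * c j) * ‖x j‖ := by
          apply mul_le_mul_of_nonneg_right _ (norm_nonneg _)
          simpa [ha_def, hc_def, mul_assoc] using hT i j
      _ = (M * a i) * (c j * ‖x j‖) := by ring
  -- finite sums of squares of x are bounded by ‖x‖²
  have hxsq : ∀ (x : Hsp e) (s : Finset κ), ∑ j ∈ s, ‖x j‖ ^ 2 ≤ ‖x‖ ^ 2 := by
    intro x s
    have := lp.sum_rpow_le_norm_rpow h2pos x s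
    rw [h2] at this
    simpa [Real.rpow_two] using this
  -- Cauchy-Schwarz finite-sum bound
  have hCS : ∀ (x : Hsp e) (s : Finset κ),
      ∑ j ∈ s, c j * ‖x j‖ ≤ Real.sqrt C₂ * ‖x‖ := by
    intro x s
    have h1 : (∑ j ∈ s, c j * ‖x j‖) ^ 2 ≤ (∑ j ∈ s, c j ^ 2) * ∑ j ∈ s, ‖x j‖ ^ 2 :=
      Finset.sum_mul_sq_le_sq_mul_sq s c (fun j => ‖x j‖)
    have h2' : (∑ j ∈ s, c j ^ 2) * ∑ j ∈ s, ‖x j‖ ^ 2 ≤ C₂ * ‖x‖ ^ 2 := by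
      apply mul_le_mul (Summable.sum_le_tsum s (fun j _ => sq_nonneg _) hc2_sum) (hxsq x s)
        (Finset.sum_nonneg fun j _ => sq_nonneg _) hC₂_nonneg
    have h3 : (∑ j ∈ s, c j * ‖x j‖) ^ 2 ≤ (Real.sqrt C₂ * ‖x‖) ^ 2 := by
      rw [mul_pow, Real.sq_sqrt hC₂_nonneg]
      exact h1.trans h2'
    have hnn : 0 ≤ ∑ j ∈ s, c j * ‖x j‖ :=
      Finset.sum_nonneg fun j _ => mul_nonneg (hc_nonneg j) (norm_nonneg _)
    exact (abs_le_of_sq_le_sq' h3 (mul_nonneg (Real.sqrt_nonneg _) (norm_nonneg _))).2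
  -- row-sum bound
  have hrow : ∀ (x : Hsp e) (i : ι) (s : Finset κ),
      ∑ j ∈ s, ‖T i j (x j)‖ ≤ (M * a i) * (Real.sqrt C₂ * ‖x‖) := by
    intro x i s
    calc ∑ j ∈ s, ‖T i j (x j)‖ ≤ ∑ j ∈ s, (M * a i) * (c j * ‖x j‖) :=
          Finset.sum_le_sum fun j _ => hblock x i j
      _ = (M * a i) * ∑ j ∈ s, c j * ‖x j‖ := by rw [Finset.mul_sum]
      _ ≤ (M * a i) * (Real.sqrt C₂ * ‖x‖) := by
          apply mul_le_mul_of_nonneg_left (hCS x s)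
            (mul_nonneg hM (ha_nonneg i))
  have hsumnorm : ∀ (x : Hsp e) (i : ι), Summable (fun j => ‖T i j (x j)‖) := fun x i =>
    summable_of_sum_le (fun j => norm_nonneg _) (hrow x i)
  have hsummable : ∀ (x : Hsp e) (i : ι), Summable (fun j => T i j (x j)) := fun x i =>
    (hsumnorm x i).of_norm
  -- the candidate function
  set f : Hsp e → ∀ i, EuclideanSpace ℂ (Fin (d i)) :=
    fun x i => ∑' j, T i j (x j) with hf_def
  have hfle : ∀ (x : Hsp e) (i : ι), ‖f x i‖ ≤ (M * a i) * (Real.sqrt C₂ * ‖x‖) := by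
    intro x i
    refine (norm_tsum_le_tsum_norm (hsumnorm x i)).trans ?_
    exact Summable.tsum_le_of_sum_le (hsumnorm x i) (hrow x i)
  -- square-sum bound
  have hsqsum : ∀ (x : Hsp e) (s : Finset ι),
      ∑ i ∈ s, ‖f x i‖ ^ 2 ≤ S₁ * C₂ * (M * ‖x‖) ^ 2 := by
    intro x s
    calc ∑ i ∈ s, ‖f x i‖ ^ 2 ≤ ∑ i ∈ s, ((M * a i) * (Real.sqrt C₂ * ‖x‖)) ^ 2 := by
          apply Finset.sum_le_sum
          intro i _
          exact pow_le_pow_left₀ (norm_nonneg _) (hfle x i) 2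
      _ = (M * (Real.sqrt C₂ * ‖x‖)) ^ 2 * ∑ i ∈ s, a i ^ 2 := by
          rw [Finset.mul_sum]; congr 1; ext i; ring
      _ ≤ (M * (Real.sqrt C₂ * ‖x‖)) ^ 2 * S₁ := by
          apply mul_le_mul_of_nonneg_left _ (sq_nonneg _)
          rw [← hS₁'.tsum_eq]
          exact Summable.sum_le_tsum s (fun i _ => sq_nonneg _) hS₁'.summable
      _ = S₁ * C₂ * (M * ‖x‖) ^ 2 := by
          rw [mul_pow, mul_pow, Real.sq_sqrt hC₂_nonneg]; ring
  have hmem : ∀ x : Hsp e, Memℓp (f x) 2 := by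
    intro x
    apply memℓp_gen' (C := S₁ * C₂ * (M * ‖x‖) ^ 2)
    intro s
    have := hsqsum x s
    rw [h2]
    simpa [Real.rpow_two] using this
  -- the linear map
  set A₀ : Hsp e →ₗ[ℂ] Hsp d :=
    { toFun := fun x => ⟨f x, hmem x⟩
      map_add' := by
        intro x y
        apply Subtype.ext
        funext i
        show f (x + y) i = f x i + f y i
        have : (fun j => T i j ((x + y) j)) = fun j => T i j (x j) + T i j (y j) := by
          funext j
          rw [lp.coeFn_add]
          simp
        rw [hf_def]
        simp only
        rw [this, Summable.tsum_add (hsummable x i) (hsummable y i)]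
      map_smul' := by
        intro r x
        apply Subtype.ext
        funext i
        show f (r • x) i = r • f x i
        have : (fun j => T i j ((r • x) j)) = fun j => r • T i j (x j) := by
          funext j
          rw [lp.coeFn_smul]
          simp
        rw [hf_def]
        simp only
        rw [this, Summable.tsum_const_smul r (hsummable x i)] } with hA₀_def
  have hA₀bound : ∀ x : Hsp e, ‖A₀ x‖ ≤ Real.sqrt (S₁ * S₂) * M * ‖x‖ := by
    intro x
    apply lp.norm_le_of_forall_sum_le h2pos
      (by positivity)
    intro s
    rw [h2]
    have h1 : ∑ i ∈ s, ‖(A₀ x) i‖ ^ 2 ≤ S₁ * C₂ * (M * ‖x‖) ^ 2 := hsqsum x s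
    have h2' : S₁ * C₂ * (M * ‖x‖) ^ 2 ≤ (Real.sqrt (S₁ * S₂) * M * ‖x‖) ^ 2 := by
      have hs : Real.sqrt (S₁ * S₂) ^ 2 = S₁ * S₂ := Real.sq_sqrt (mul_nonneg hS₁nonneg hS₂nonneg)
      nlinarith [sq_nonneg (M * ‖x‖), mul_nonneg hM (norm_nonneg x), sq_nonneg ‖x‖,
        mul_nonneg hS₁nonneg (sq_nonneg (M * ‖x‖))]
    have h3 := h1.trans h2'
    calc ∑ i ∈ s, ‖(A₀ x) i‖ ^ (2:ℝ) = ∑ i ∈ s, ‖(A₀ x) i‖ ^ 2 := by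
          simp only [Real.rpow_two]
      _ ≤ (Real.sqrt (S₁ * S₂) * M * ‖x‖) ^ 2 := h3
      _ = (Real.sqrt (S₁ * S₂) * M * ‖x‖) ^ (2:ℝ) := (Real.rpow_two _).symm
  refine ⟨A₀.mkContinuous (Real.sqrt (S₁ * S₂) * M) hA₀bound, fun x i => ?_, 
    A₀.mkContinuous_norm_le (by positivity) hA₀bound⟩
  show (A₀ x : ∀ i, EuclideanSpace ℂ (Fin (d i))) i = _
  rfl
end

section
/- Let ι be a countable index type, d, e : ι → ℕ, and let T i : EuclideanSpace ℂ (Fin (e i)) →L[ℂ] EuclideanSpace ℂ (Fin (d i)) be a family of operators with sup_i ‖T i‖ < ∞, and let A : H(e) → H(d) be the bounded block-diagonal operator with (A x) i = T i (x i). Then A is a compact operator if and only if the block norms vanish at infinity, i.e. the function i ↦ ‖T i‖ tends to 0 along the cofinite filter on ι. -/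
open scoped ENNReal

lemma lpIncl_apply_self {α : Type*} (d : α → ℕ) (j : α) (v : EuclideanSpace ℂ (Fin (d j))) :
    lpIncl d j v j = v := by
  letI := Classical.decEq α
  exact lp.single_apply_self (E := fun i => EuclideanSpace ℂ (Fin (d i))) 2 j v

lemma lpIncl_apply_ne {α : Type*} (d : α → ℕ) (j : α) (v : EuclideanSpace ℂ (Fin (d j)))
    {k : α} (h : k ≠ j) : lpIncl d j v k = 0 := by
  letI := Classical.decEq α
  exact lp.single_apply_ne (E := fun i => EuclideanSpace ℂ (Fin (d i))) 2 j v h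

lemma lpIncl_norm {α : Type*} (d : α → ℕ) (j : α) (v : EuclideanSpace ℂ (Fin (d j))) :
    ‖lpIncl d j v‖ = ‖v‖ := by
  letI := Classical.decEq α
  have h := lp.norm_single (p := 2) (E := fun i => EuclideanSpace ℂ (Fin (d i)))
    (by norm_num) j v
  exact h

lemma aux_finrank_compact {E F : Type*} [NormedAddCommGroup E] [NormedAddCommGroup F]
    [NormedSpace ℂ E] [NormedSpace ℂ F] (f : E →L[ℂ] F) (V : Submodule ℂ F)
    [FiniteDimensional ℂ V] (hV : ∀ x, f x ∈ V) : IsCompactOperator ⇑f := by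
  haveI : ProperSpace V := FiniteDimensional.proper ℂ V
  refine ⟨Subtype.val '' Metric.closedBall (0 : V) ‖f‖,
    (isCompact_closedBall _ _).image continuous_subtype_val, ?_⟩
  refine Filter.mem_of_superset (Metric.closedBall_mem_nhds (0 : E) one_pos) ?_
  intro x hx
  refine ⟨⟨f x, hV x⟩, ?_, rfl⟩
  rw [Metric.mem_closedBall, dist_zero_right]
  have hx1 : ‖x‖ ≤ 1 := by rwa [Metric.mem_closedBall, dist_zero_right] at hx
  calc ‖(⟨f x, hV x⟩ : V)‖ = ‖f x‖ := rfl
    _ ≤ ‖f‖ * ‖x‖ := f.le_opNorm x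
    _ ≤ ‖f‖ * 1 := mul_le_mul_of_nonneg_left hx1 (norm_nonneg f)
    _ = ‖f‖ := mul_one _


set_option maxHeartbeats 2000000 in
/-- A bounded block-diagonal operator is compact iff the block norms vanish at
infinity. -/
theorem blockDiagonal_compact_iff
    {ι : Type*} [Countable ι] (d e : ι → ℕ)
    (T : ∀ i : ι, EuclideanSpace ℂ (Fin (e i)) →L[ℂ] EuclideanSpace ℂ (Fin (d i)))
    (hbdd : BddAbove (Set.range fun i : ι => ‖T i‖))
    (A : Hsp e →L[ℂ] Hsp d)
    (hA : ∀ (x : Hsp e) (i : ι), (A x) i = T i (x i)) :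
    IsCompactOperator (⇑A) ↔
      Filter.Tendsto (fun i : ι => ‖T i‖) Filter.cofinite (nhds 0) := by
  classical
  have hq : (0:ℝ) < (2:ℝ≥0∞).toReal := by norm_num
  constructor
  · intro hcpt
    rw [Metric.tendsto_nhds]
    intro ε hε
    rw [Filter.eventually_cofinite]
    by_contra hinf
    have hS : {i : ι | ¬ dist ‖T i‖ 0 < ε}.Infinite := hinf
    have hpick : ∀ i ∈ {i : ι | ¬ dist ‖T i‖ 0 < ε}, ∃ v : EuclideanSpace ℂ (Fin (e i)),
        ‖v‖ ≤ 1 ∧ ε/2 ≤ ‖T i v‖ := by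
      intro i hi
      have hi' : ε ≤ ‖T i‖ := by
        simp only [Set.mem_setOf_eq, Real.dist_0_eq_abs, not_lt,
          abs_of_nonneg (norm_nonneg _)] at hi
        exact hi
      have h2 : ¬ ‖T i‖ ≤ ε/2 := by push_neg; linarith
      rw [ContinuousLinearMap.opNorm_le_iff (by positivity)] at h2
      push_neg at h2
      obtain ⟨x, hx⟩ := h2
      have hx0 : x ≠ 0 := by
        rintro rfl
        simp only [norm_zero, mul_zero, map_zero] at hx
        exact absurd hx (lt_irrefl 0)
      have hxpos : 0 < ‖x‖ := norm_pos_iff.2 hx0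
      refine ⟨((‖x‖ : ℂ))⁻¹ • x, ?_, ?_⟩
      · rw [norm_smul, norm_inv, Complex.norm_real, Real.norm_eq_abs,
          abs_of_nonneg (norm_nonneg x)]
        exact le_of_eq (inv_mul_cancel₀ hxpos.ne')
      · rw [map_smul, norm_smul, norm_inv, Complex.norm_real, Real.norm_eq_abs,
          abs_of_nonneg (norm_nonneg x)]
        have h3 : ε/2 ≤ ‖T i x‖ / ‖x‖ := (le_div_iff₀ hxpos).2 hx.le
        rwa [div_eq_inv_mul (‖(T i) x‖) (‖x‖)] at h3
    choose v hv1 hv2 using hpick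
    let g : ℕ → ι := fun n => (hS.natEmbedding _ n : ι)
    have hg_mem : ∀ n, g n ∈ {i : ι | ¬ dist ‖T i‖ 0 < ε} := fun n => (hS.natEmbedding _ n).2
    have hg_inj : Function.Injective g := fun m n h =>
      (hS.natEmbedding _).injective (Subtype.ext h)
    set w : ℕ → Hsp e := fun n => lpIncl e (g n) (v (g n) (hg_mem n)) with hw
    have hxball : ∀ n, w n ∈ Metric.closedBall (0 : Hsp e) 1 := by
      intro n
      rw [Metric.mem_closedBall, dist_zero_right, hw, lpIncl_norm]
      exact hv1 _ _
    have hsep : ∀ m n : ℕ, m ≠ n → ε/2 ≤ ‖A (w m) - A (w n)‖ := by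
      intro m n hmn
      have h1 : (A (w m) - A (w n)) (g m) = T (g m) (v (g m) (hg_mem m)) := by
        have hc : (A (w m) - A (w n)) (g m) = (A (w m)) (g m) - (A (w n)) (g m) := by
          rw [lp.coeFn_sub]; rfl
        rw [hc, hA, hA, hw]
        have h2 : (lpIncl e (g n) (v (g n) (hg_mem n))) (g m) = 0 :=
          lpIncl_apply_ne e (g n) _ (fun h => hmn (hg_inj h))
        rw [lpIncl_apply_self, h2, map_zero, sub_zero]
      calc ε/2 ≤ ‖T (g m) (v (g m) (hg_mem m))‖ := hv2 _ _
        _ = ‖(A (w m) - A (w n)) (g m)‖ := by rw [h1]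
        _ ≤ ‖A (w m) - A (w n)‖ := lp.norm_apply_le_norm two_ne_zero _ _
    obtain ⟨K, hK, hKsub⟩ :=
      IsCompactOperator.image_closedBall_subset_compact (f := (A : Hsp e →ₗ[ℂ] Hsp d)) hcpt 1
    have hyK : ∀ n, A (w n) ∈ K := fun n => hKsub ⟨w n, hxball n, rfl⟩
    obtain ⟨a, -, φ, hφ, hconv⟩ := hK.tendsto_subseq hyK
    rw [Metric.tendsto_atTop] at hconv
    obtain ⟨N, hN⟩ := hconv (ε/4) (by positivity)
    have h1 := hN N le_rfl
    have h2 := hN (N+1) (Nat.le_succ N)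
    have h3 : dist (A (w (φ N))) (A (w (φ (N+1)))) < ε/2 := by
      calc dist (A (w (φ N))) (A (w (φ (N+1))))
          ≤ dist (A (w (φ N))) a + dist a (A (w (φ (N+1)))) := dist_triangle _ _ _
        _ < ε/4 + ε/4 := by rw [dist_comm a]; exact add_lt_add h1 h2
        _ = ε/2 := by ring
    have h4 := hsep (φ N) (φ (N+1)) (hφ (Nat.lt_succ_self N)).ne
    rw [dist_eq_norm] at h3
    linarith
  · intro htend
    set B : Finset ι → (Hsp e →L[ℂ] Hsp d) :=
      fun s => ∑ i ∈ s, (lpIncl d i).comp ((T i).comp (lpProj e i)) with hB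
    have hBsum : ∀ (s : Finset ι) (x : Hsp e), B s x = ∑ i ∈ s, lpIncl d i (T i (x i)) := by
      intro s x
      rw [hB]
      simp [ContinuousLinearMap.sum_apply, ContinuousLinearMap.comp_apply]
      rfl
    have hBapp : ∀ (s : Finset ι) (x : Hsp e) (k : ι),
        (B s x) k = if k ∈ s then T k (x k) else 0 := by
      intro s x k
      rw [hBsum, lp.coeFn_sum, Finset.sum_apply]
      by_cases hk : k ∈ s
      · rw [if_pos hk]
        rw [Finset.sum_eq_single_of_mem k hk
          (fun i _ hik => lpIncl_apply_ne d i _ (Ne.symm hik))]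
        exact lpIncl_apply_self d k _
      · rw [if_neg hk]
        exact Finset.sum_eq_zero fun i hi => lpIncl_apply_ne d i _ (fun h => hk (h ▸ hi))
    have key : ∀ (s : Finset ι) (c : ℝ), 0 ≤ c → (∀ i ∉ s, ‖T i‖ ≤ c) → ‖B s - A‖ ≤ c := by
      intro s c hc hsc
      refine ContinuousLinearMap.opNorm_le_bound _ hc ?_
      intro x
      refine lp.norm_le_of_forall_sum_le hq (by positivity) ?_
      intro t
      have hy : ∀ k, ‖((B s - A) x) k‖ ≤ c * ‖x k‖ := by
        intro k
        have hck : ((B s - A) x) k = (B s x) k - (A x) k := by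
          rw [ContinuousLinearMap.sub_apply, lp.coeFn_sub]; rfl
        rw [hck, hBapp, hA]
        by_cases hk : k ∈ s
        · rw [if_pos hk, sub_self, norm_zero]; positivity
        · rw [if_neg hk, zero_sub, norm_neg]
          exact ((T k).le_opNorm _).trans
            (mul_le_mul_of_nonneg_right (hsc k hk) (norm_nonneg _))
      calc ∑ k ∈ t, ‖((B s - A) x) k‖ ^ (2:ℝ≥0∞).toReal
          ≤ ∑ k ∈ t, (c * ‖x k‖) ^ (2:ℝ≥0∞).toReal :=
            Finset.sum_le_sum fun k _ => Real.rpow_le_rpow (norm_nonneg _) (hy k) hq.le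
        _ = c ^ (2:ℝ≥0∞).toReal * ∑ k ∈ t, ‖x k‖ ^ (2:ℝ≥0∞).toReal := by
            rw [Finset.mul_sum]
            exact Finset.sum_congr rfl fun k _ => Real.mul_rpow hc (norm_nonneg _)
        _ ≤ c ^ (2:ℝ≥0∞).toReal * ‖x‖ ^ (2:ℝ≥0∞).toReal :=
            mul_le_mul_of_nonneg_left (lp.sum_rpow_le_norm_rpow hq x t)
              (Real.rpow_nonneg hc _)
        _ = (c * ‖x‖) ^ (2:ℝ≥0∞).toReal := (Real.mul_rpow hc (norm_nonneg _)).symm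
    have hcomp : ∀ s : Finset ι, IsCompactOperator ⇑(B s) := by
      intro s
      refine aux_finrank_compact (B s)
        (s.sup fun i => LinearMap.range ((lpIncl d i).toLinearMap)) ?_
      intro x
      rw [hBsum]
      refine Submodule.sum_mem _ fun i hi => ?_
      exact Finset.le_sup (f := fun i => LinearMap.range ((lpIncl d i).toLinearMap)) hi
        ⟨T i (x i), rfl⟩
    refine isCompactOperator_of_tendsto (l := Filter.atTop) ?_
      (Filter.Eventually.of_forall hcomp)
    rw [Metric.tendsto_nhds]
    intro ε hε
    have hfin : {i : ι | ¬ ‖T i‖ < ε/2}.Finite := by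
      have h := htend.eventually_lt_const (by positivity : (0:ℝ) < ε/2)
      rwa [Filter.eventually_cofinite] at h
    rw [Filter.eventually_atTop]
    refine ⟨hfin.toFinset, fun s hs => ?_⟩
    have hbound : ‖B s - A‖ ≤ ε/2 := key s (ε/2) (by positivity) (fun i hi => by
      by_contra h
      exact hi (hs (hfin.mem_toFinset.2 (not_lt.2 (le_of_lt (not_le.1 h))))))
    rw [dist_eq_norm]
    exact lt_of_le_of_lt hbound (by linarith)
end

section
/- Let ι and κ be countable index types, d : ι → ℕ and e : κ → ℕ with e j ≥ 1 for all j, and let λ : ι → ℝ and σ : κ → ℝ be nonnegative functions with Σ_i (1 + λ i)^(−m) < ∞ and Σ_j (e j)(1 + σ j)^(−n) < ∞ for some reals m, n ≥ 0. Let T i j : EuclideanSpace ℂ (Fin (e j)) →L[ℂ] EuclideanSpace ℂ (Fin (d i)) satisfy sup_{i,j} (1 + λ i)^(m/2) (1 + σ j)^(n/2) ‖T i j‖ < ∞, and assume moreover that ε j := sup_i (1 + λ i)^(m/2) (1 + σ j)^(n/2) ‖T i j‖ tends to 0 along the cofinite filter on κ. Then the bounded operator A : H(e) → H(d) with (A x)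 i = Σ_j T i j (x j) is compact. -/
open scoped ENNReal

section Aux

open Filter Set

/-- A continuous linear map out of a finite-dimensional Euclidean space is compact. -/
lemma isCompactOperator_of_euclidean {k : ℕ} {Y : Type*} [NormedAddCommGroup Y]
    [NormedSpace ℂ Y] (f : EuclideanSpace ℂ (Fin k) →L[ℂ] Y) :
    IsCompactOperator ⇑f :=
  ⟨f '' Metric.closedBall 0 1,
    ((isCompact_closedBall (0 : EuclideanSpace ℂ (Fin k)) 1).image f.continuous),
    Filter.mem_of_superset (Metric.closedBall_mem_nhds 0 one_pos)
      (Set.subset_preimage_image _ _)⟩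

end Aux

set_option maxHeartbeats 1600000

/-- Vanishing-decay compactness criterion: if the weighted block norms are
uniformly bounded and the column suprema vanish at infinity, the block operator
is compact. -/
theorem vanishing_decay_compactness
    {ι κ : Type*} [Countable ι] [Countable κ]
    (d : ι → ℕ) (e : κ → ℕ) (he : ∀ j, 1 ≤ e j)
    (lam : ι → ℝ) (sig : κ → ℝ) (hlam : ∀ i, 0 ≤ lam i) (hsig : ∀ j, 0 ≤ sig j)
    (m n : ℝ) (hm : 0 ≤ m) (hn : 0 ≤ n)
    (hsum₁ : Summable fun i : ι => (1 + lam i) ^ (-m))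
    (hsum₂ : Summable fun j : κ => (e j : ℝ) * (1 + sig j) ^ (-n))
    (T : ∀ (i : ι) (j : κ), EuclideanSpace ℂ (Fin (e j)) →L[ℂ] EuclideanSpace ℂ (Fin (d i)))
    (hbdd : BddAbove (Set.range fun p : ι × κ =>
      (1 + lam p.1) ^ (m / 2) * (1 + sig p.2) ^ (n / 2) * ‖T p.1 p.2‖))
    (heps : Filter.Tendsto
      (fun j : κ => ⨆ i : ι, (1 + lam i) ^ (m / 2) * (1 + sig j) ^ (n / 2) * ‖T i j‖)
      Filter.cofinite (nhds 0))
    (A : Hsp e →L[ℂ] Hsp d)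
    (hA : ∀ (x : Hsp e) (i : ι), (A x) i = ∑' j : κ, T i j (x j)) :
    IsCompactOperator (⇑A) := by
  classical
  rcases isEmpty_or_nonempty ι with hι | hι
  · have hA0 : ⇑A = fun _ => (0 : Hsp d) := by
      funext x
      apply Subtype.ext
      funext i
      exact hι.elim i
    rw [hA0]
    exact isCompactOperator_zero
  rcases isEmpty_or_nonempty κ with hκ | hκ
  · have hA0 : ⇑A = fun _ => (0 : Hsp d) := by
      funext x
      apply Subtype.ext
      funext i
      have h0 : (A x) i = 0 := by
        rw [hA, tsum_eq_sum (s := (∅ : Finset κ)) (fun b _ => hκ.elim b), Finset.sum_empty]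
      simpa using h0
    rw [hA0]
    exact isCompactOperator_zero
  -- positivity facts
  have hwpos : ∀ i, (0:ℝ) < 1 + lam i := fun i => by linarith [hlam i]
  have hvpos : ∀ j, (0:ℝ) < 1 + sig j := fun j => by linarith [hsig j]
  -- weights
  set P : ι → ℝ := fun i => ((1 + lam i) ^ (m/2))⁻¹ with hPdef
  set R : κ → ℝ := fun j => ((1 + sig j) ^ (n/2))⁻¹ with hRdef
  have hPpos : ∀ i, 0 < P i := fun i => inv_pos.2 (Real.rpow_pos_of_pos (hwpos i) _)
  have hRpos : ∀ j, 0 < R j := fun j => inv_pos.2 (Real.rpow_pos_of_pos (hvpos j) _)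
  have hP2 : ∀ i, P i ^ 2 = (1 + lam i) ^ (-m) := by
    intro i
    rw [hPdef]
    rw [inv_pow, ← Real.rpow_natCast ((1 + lam i) ^ (m/2)) 2,
      ← Real.rpow_mul (hwpos i).le, Real.rpow_neg (hwpos i).le]
    norm_num
  have hR2 : ∀ j, R j ^ 2 = (1 + sig j) ^ (-n) := by
    intro j
    rw [hRdef]
    rw [inv_pow, ← Real.rpow_natCast ((1 + sig j) ^ (n/2)) 2,
      ← Real.rpow_mul (hvpos j).le, Real.rpow_neg (hvpos j).le]
    norm_num
  have hsumP : Summable fun i => P i ^ 2 := by simp only [hP2]; exact hsum₁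
  have hsumR : Summable fun j => R j ^ 2 := by
    refine Summable.of_nonneg_of_le (fun j => sq_nonneg _) (fun j => ?_) hsum₂
    rw [hR2 j]
    have h1 : (1:ℝ) ≤ (e j : ℝ) := by exact_mod_cast he j
    exact le_mul_of_one_le_left (Real.rpow_nonneg (hvpos j).le _) h1
  set C := ∑' i, P i ^ 2 with hCdef
  set S := ∑' j, R j ^ 2 with hSdef
  have hC0 : 0 ≤ C := tsum_nonneg fun i => sq_nonneg _
  have hS0 : 0 ≤ S := tsum_nonneg fun j => sq_nonneg _
  -- uniform bound
  obtain ⟨M, hM⟩ := hbdd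
  have hM' : ∀ i j, (1 + lam i) ^ (m/2) * (1 + sig j) ^ (n/2) * ‖T i j‖ ≤ M :=
    fun i j => hM ⟨(i, j), rfl⟩
  have hbd : ∀ j, BddAbove (Set.range fun i =>
      (1 + lam i) ^ (m/2) * (1 + sig j) ^ (n/2) * ‖T i j‖) := by
    intro j
    refine ⟨M, ?_⟩
    rintro y ⟨i, rfl⟩
    exact hM' i j
  set ε : κ → ℝ :=
    fun j => ⨆ i : ι, (1 + lam i) ^ (m / 2) * (1 + sig j) ^ (n / 2) * ‖T i j‖ with hεdef
  have hεle : ∀ i j, (1 + lam i) ^ (m/2) * (1 + sig j) ^ (n/2) * ‖T i j‖ ≤ ε j :=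
    fun i j => le_ciSup (hbd j) i
  have hTb : ∀ (i : ι) (j : κ) (c : ℝ),
      ((1 + lam i) ^ (m/2) * (1 + sig j) ^ (n/2) * ‖T i j‖ ≤ c) → ‖T i j‖ ≤ c * P i * R j := by
    intro i j c hc
    have h1 : 0 < (1 + lam i) ^ (m/2) := Real.rpow_pos_of_pos (hwpos i) _
    have h2 : 0 < (1 + sig j) ^ (n/2) := Real.rpow_pos_of_pos (hvpos j) _
    rw [hPdef, hRdef]
    rw [mul_assoc, ← mul_inv, ← div_eq_mul_inv, le_div_iff₀ (by positivity), mul_comm]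
    exact hc
  have hT : ∀ i j, ‖T i j‖ ≤ ε j * P i * R j := fun i j => hTb i j _ (hεle i j)
  have hTM : ∀ i j, ‖T i j‖ ≤ M * P i * R j := fun i j => hTb i j _ (hM' i j)
  -- block projections
  set Q : Finset κ → (Hsp e →L[ℂ] Hsp e) :=
    fun F => ∑ j ∈ F, (lpIncl e j).comp (lpProj e j) with hQdef
  have hQ : ∀ (F : Finset κ) (x : Hsp e) (j : κ), (Q F x) j = if j ∈ F then x j else 0 := by
    intro F x j
    have h1 : Q F x = ∑ j' ∈ F, lp.single 2 j' (x j') := by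
      rw [hQdef]
      rw [ContinuousLinearMap.sum_apply]
      rfl
    rw [h1, lp.coeFn_sum, Finset.sum_apply]
    simp only [lp.single_apply, Finset.sum_dite_eq, Finset.sum_dite_eq', Finset.sum_pi_single]
  -- key estimate
  have key : ∀ (δ : ℝ), 0 ≤ δ → ∀ F : Finset κ, (∀ j, j ∉ F → ε j ≤ δ) →
      ∀ x : Hsp e, ‖A x - A (Q F x)‖ ≤ δ * (Real.sqrt C * Real.sqrt S) * ‖x‖ := by
    intro δ hδ F hF x
    set g : κ → ℝ := fun j => R j * ‖x j‖ with hgdef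
    have hg0 : ∀ j, 0 ≤ g j := fun j => mul_nonneg (hRpos j).le (norm_nonneg _)
    have hx2 : ∀ s : Finset κ, ∑ j ∈ s, ‖x j‖ ^ 2 ≤ ‖x‖ ^ 2 := by
      intro s
      have h := lp.sum_rpow_le_norm_rpow (p := 2)
        (E := fun j => EuclideanSpace ℂ (Fin (e j))) (by norm_num) x s
      have hp2 : ((2 : ℝ≥0∞)).toReal = (2 : ℝ) := by norm_num
      rw [hp2] at h
      simp only [Real.rpow_two] at h
      exact h
    have hgs : ∀ s : Finset κ, ∑ j ∈ s, g j ≤ Real.sqrt S * ‖x‖ := by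
      intro s
      have hcs := Finset.sum_mul_sq_le_sq_mul_sq s R fun j => ‖x j‖
      have h1 : ∑ j ∈ s, R j ^ 2 ≤ S := Summable.sum_le_tsum s (fun j _ => sq_nonneg _) hsumR
      have hsq : (∑ j ∈ s, g j) ^ 2 ≤ S * ‖x‖ ^ 2 := by
        calc (∑ j ∈ s, g j) ^ 2 ≤ (∑ j ∈ s, R j ^ 2) * ∑ j ∈ s, ‖x j‖ ^ 2 := hcs
          _ ≤ S * ‖x‖ ^ 2 := by
              refine mul_le_mul h1 (hx2 s) (Finset.sum_nonneg fun j _ => sq_nonneg _) hS0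
      have h0 : 0 ≤ ∑ j ∈ s, g j := Finset.sum_nonneg fun j _ => hg0 j
      have h2 := Real.sqrt_le_sqrt hsq
      rwa [Real.sqrt_sq h0, Real.sqrt_mul hS0, Real.sqrt_sq (norm_nonneg _)] at h2
    have hgsum : Summable g := summable_of_sum_le hg0 hgs
    have hG : ∑' j, g j ≤ Real.sqrt S * ‖x‖ := Summable.tsum_le_of_sum_le hgsum hgs
    set G := ∑' j, g j with hGdef
    have hG0 : 0 ≤ G := tsum_nonneg hg0
    have hTx : ∀ i, Summable fun j => ‖T i j (x j)‖ := by
      intro i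
      refine Summable.of_nonneg_of_le (fun j => norm_nonneg _) (fun j => ?_)
        (hgsum.mul_left (M * P i))
      calc ‖T i j (x j)‖ ≤ ‖T i j‖ * ‖x j‖ := (T i j).le_opNorm _
        _ ≤ M * P i * R j * ‖x j‖ := mul_le_mul_of_nonneg_right (hTM i j) (norm_nonneg _)
        _ = M * P i * g j := by rw [hgdef]; ring
    have hTx' : ∀ i, Summable fun j => T i j (x j) := fun i => (hTx i).of_norm
    have hyc : ∀ i, (A x - A (Q F x) : Hsp d) i
        = ∑' j : ↑((↑F : Set κ)ᶜ), T i ↑j (x ↑j) := by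
      intro i
      have hsplit := Summable.sum_add_tsum_compl (s := F) (hTx' i)
      have hQA : (A (Q F x)) i = ∑ j ∈ F, T i j (x j) := by
        rw [hA]
        rw [tsum_eq_sum (s := F) (fun j hj => by rw [hQ F x j, if_neg hj, map_zero])]
        exact Finset.sum_congr rfl fun j hj => by rw [hQ F x j, if_pos hj]
      have hAx : (A x) i = ∑' j, T i j (x j) := hA x i
      calc (A x - A (Q F x) : Hsp d) i = (A x) i - (A (Q F x)) i := by
            rw [lp.coeFn_sub, Pi.sub_apply]
        _ = ∑' j : ↑((↑F : Set κ)ᶜ), T i ↑j (x ↑j) := by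
            rw [hAx, hQA, ← hsplit, add_sub_cancel_left]
    have hyb : ∀ i, ‖(A x - A (Q F x) : Hsp d) i‖ ≤ δ * P i * G := by
      intro i
      rw [hyc i]
      have hsub : Summable fun j : ↑((↑F : Set κ)ᶜ) => ‖T i ↑j (x ↑j)‖ := (hTx i).subtype _
      calc ‖∑' j : ↑((↑F : Set κ)ᶜ), T i ↑j (x ↑j)‖
          ≤ ∑' j : ↑((↑F : Set κ)ᶜ), ‖T i ↑j (x ↑j)‖ := norm_tsum_le_tsum_norm hsub
        _ ≤ ∑' j : ↑((↑F : Set κ)ᶜ), δ * P i * g ↑j := by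
            refine Summable.tsum_le_tsum (fun j => ?_) hsub ((hgsum.mul_left (δ * P i)).subtype _)
            have hεδ : ε (↑j : κ) ≤ δ := hF ↑j (by
              have hj2 := j.2
              rw [Set.mem_compl_iff, Finset.mem_coe] at hj2
              exact hj2)
            calc ‖T i ↑j (x ↑j)‖ ≤ ‖T i ↑j‖ * ‖x ↑j‖ := (T i ↑j).le_opNorm _
              _ ≤ ε ↑j * P i * R ↑j * ‖x ↑j‖ :=
                  mul_le_mul_of_nonneg_right (hT i ↑j) (norm_nonneg _)
              _ ≤ δ * P i * R ↑j * ‖x ↑j‖ := by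
                  have h1 : 0 ≤ P i := (hPpos i).le
                  have h2 : 0 ≤ R (↑j : κ) := (hRpos ↑j).le
                  have h3 : 0 ≤ ‖x (↑j : κ)‖ := norm_nonneg _
                  gcongr
              _ = δ * P i * g ↑j := by rw [hgdef]; ring
        _ = δ * P i * ∑' j : ↑((↑F : Set κ)ᶜ), g ↑j := tsum_mul_left
        _ ≤ δ * P i * G := by
            have hle : (∑' j : ↑((↑F : Set κ)ᶜ), g ↑j) ≤ G := by
              have h4 := Summable.sum_add_tsum_compl (s := F) hgsum
              have h5 : 0 ≤ ∑ j ∈ F, g j := Finset.sum_nonneg fun j _ => hg0 j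
              rw [hGdef]
              linarith
            exact mul_le_mul_of_nonneg_left hle (mul_nonneg hδ (hPpos i).le)
    set y : Hsp d := A x - A (Q F x) with hy
    have hy2 : ‖y‖ ^ 2 = ∑' i, ‖y i‖ ^ 2 := by
      have h := lp.norm_rpow_eq_tsum (p := 2)
        (E := fun i => EuclideanSpace ℂ (Fin (d i))) (by norm_num) y
      have hp2 : ((2 : ℝ≥0∞)).toReal = (2 : ℝ) := by norm_num
      rw [hp2] at h
      simp only [Real.rpow_two] at h
      exact h
    have hysum : Summable fun i => ‖y i‖ ^ 2 := by
      have h := ((lp.memℓp y).summable (p := 2) (by norm_num))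
      have hp2 : ((2 : ℝ≥0∞)).toReal = (2 : ℝ) := by norm_num
      rw [hp2] at h
      simp only [Real.rpow_two] at h
      exact h
    have hbound : ∑' i, ‖y i‖ ^ 2 ≤ (δ * G) ^ 2 * C := by
      calc ∑' i, ‖y i‖ ^ 2 ≤ ∑' i, (δ * G) ^ 2 * P i ^ 2 := by
            refine Summable.tsum_le_tsum (fun i => ?_) hysum (hsumP.mul_left _)
            have h2 : ‖y i‖ ^ 2 ≤ (δ * P i * G) ^ 2 :=
              pow_le_pow_left₀ (norm_nonneg _) (hyb i) 2
            calc ‖y i‖ ^ 2 ≤ (δ * P i * G) ^ 2 := h2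
              _ = (δ * G) ^ 2 * P i ^ 2 := by ring
        _ = (δ * G) ^ 2 * C := by rw [hCdef, tsum_mul_left]
    have hG2 : G ^ 2 ≤ S * ‖x‖ ^ 2 := by
      calc G ^ 2 ≤ (Real.sqrt S * ‖x‖) ^ 2 := pow_le_pow_left₀ hG0 hG 2
        _ = S * ‖x‖ ^ 2 := by rw [mul_pow, Real.sq_sqrt hS0]
    have hfin : ‖y‖ ^ 2 ≤ (δ * (Real.sqrt C * Real.sqrt S) * ‖x‖) ^ 2 := by
      rw [hy2]
      have hrs : (δ * (Real.sqrt C * Real.sqrt S) * ‖x‖) ^ 2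
          = δ ^ 2 * (C * (S * ‖x‖ ^ 2)) := by
        rw [mul_pow, mul_pow, mul_pow, Real.sq_sqrt hC0, Real.sq_sqrt hS0]; ring
      rw [hrs]
      have h6 := mul_le_mul_of_nonneg_left hG2 (mul_nonneg (sq_nonneg δ) hC0)
      calc ∑' i, ‖y i‖ ^ 2 ≤ (δ * G) ^ 2 * C := hbound
        _ = δ ^ 2 * C * G ^ 2 := by ring
        _ ≤ δ ^ 2 * C * (S * ‖x‖ ^ 2) := h6
        _ = δ ^ 2 * (C * (S * ‖x‖ ^ 2)) := by ring
    have h0 : 0 ≤ δ * (Real.sqrt C * Real.sqrt S) * ‖x‖ := by positivity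
    calc ‖y‖ = Real.sqrt (‖y‖ ^ 2) := (Real.sqrt_sq (norm_nonneg _)).symm
      _ ≤ Real.sqrt ((δ * (Real.sqrt C * Real.sqrt S) * ‖x‖) ^ 2) := Real.sqrt_le_sqrt hfin
      _ = δ * (Real.sqrt C * Real.sqrt S) * ‖x‖ := Real.sqrt_sq h0
  -- operator-norm bound
  have hop : ∀ (δ : ℝ), 0 ≤ δ → ∀ F : Finset κ, (∀ j, j ∉ F → ε j ≤ δ) →
      ‖A - A.comp (Q F)‖ ≤ δ * (Real.sqrt C * Real.sqrt S) := by
    intro δ hδ F hF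
    refine ContinuousLinearMap.opNorm_le_bound _ (by positivity) fun x => ?_
    rw [ContinuousLinearMap.sub_apply, ContinuousLinearMap.comp_apply]
    exact key δ hδ F hF x
  -- compactness of approximants
  have hcompQ : ∀ F : Finset κ, IsCompactOperator ⇑(A.comp (Q F)) := by
    intro F
    induction F using Finset.induction_on with
    | empty =>
        have h1 : Q ∅ = 0 := by rw [hQdef]; simp
        rw [h1, ContinuousLinearMap.comp_zero]
        exact isCompactOperator_zero
    | insert j F hj ih =>
        have hsplit : A.comp (Q (insert j F))
            = ((A.comp (lpIncl e j)).comp (lpProj e j)) + A.comp (Q F) := by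
          simp only [hQdef]
          rw [Finset.sum_insert hj, ContinuousLinearMap.comp_add,
            ContinuousLinearMap.comp_assoc]
        have h1 : IsCompactOperator (⇑(A.comp (lpIncl e j)) ∘ ⇑(lpProj e j)) :=
          (isCompactOperator_of_euclidean (A.comp (lpIncl e j))).comp_clm (lpProj e j)
        rw [hsplit]
        have h2 : ⇑(((A.comp (lpIncl e j)).comp (lpProj e j)) + A.comp (Q F))
            = ⇑((A.comp (lpIncl e j)).comp (lpProj e j)) + ⇑(A.comp (Q F)) := rfl
        rw [h2]
        exact h1.add ih
  -- approximation sequence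
  have hFk : ∀ k : ℕ, {j : κ | ¬ ε j < 1 / ((k : ℝ) + 1)}.Finite := by
    intro k
    have hpos : (0:ℝ) < 1 / ((k : ℝ) + 1) := by positivity
    have h : ∀ᶠ j in Filter.cofinite, ε j < 1 / ((k : ℝ) + 1) :=
      heps.eventually_lt_const hpos
    exact Filter.eventually_cofinite.mp h
  have hb : ∀ k : ℕ, ‖A.comp (Q (hFk k).toFinset) - A‖
      ≤ 1 / ((k : ℝ) + 1) * (Real.sqrt C * Real.sqrt S) := by
    intro k
    rw [norm_sub_rev]
    refine hop (1 / ((k : ℝ) + 1)) (by positivity) (hFk k).toFinset fun j hj => ?_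
    have hlt : ε j < 1 / ((k : ℝ) + 1) := by
      by_contra h
      exact hj ((hFk k).mem_toFinset.2 h)
    exact hlt.le
  have htend : Filter.Tendsto (fun k : ℕ => A.comp (Q (hFk k).toFinset))
      Filter.atTop (nhds A) := by
    rw [tendsto_iff_norm_sub_tendsto_zero]
    refine squeeze_zero (fun k => norm_nonneg _) hb ?_
    have h := tendsto_one_div_add_atTop_nhds_zero_nat.mul_const
      (Real.sqrt C * Real.sqrt S)
    simpa using h
  exact isCompactOperator_of_tendsto htend
    (Filter.Eventually.of_forall fun k => hcompQ _)
end

section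
/- Let ι and κ be countable index types, d : ι → ℕ and e : κ → ℕ, and let A : H(e) → H(d) be a compact operator. Then the column operators vanish at infinity: the function j ↦ ‖A ∘ ι_j‖ tends to 0 along the cofinite filter on κ; in particular sup_i ‖P_i ∘ A ∘ ι_j‖ → 0 along the cofinite filter on κ. -/
open scoped ENNReal

set_option maxHeartbeats 1000000 in
set_option synthInstance.maxHeartbeats 1000000 in
/-- For a compact operator the column operators vanish at infinity, and in
particular so do the suprema of the block norms in each column. -/
theorem compact_columns_vanish
    {ι κ : Type*} [Countable ι] [Countable κ]
    (d : ι → ℕ) (e : κ → ℕ)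
    (A : Hsp e →L[ℂ] Hsp d) (hA : IsCompactOperator (⇑A)) :
    Filter.Tendsto (fun j : κ => ‖A.comp (lpIncl e j)‖) Filter.cofinite (nhds 0) ∧
    Filter.Tendsto (fun j : κ => ⨆ i : ι, ‖(lpProj d i).comp (A.comp (lpIncl e j))‖)
      Filter.cofinite (nhds 0) := by
  classical
  have key : Filter.Tendsto (fun j : κ => ‖A.comp (lpIncl e j)‖) Filter.cofinite (nhds 0) := by
    rw [Metric.tendsto_nhds]
    intro ε hε
    rw [Filter.eventually_cofinite]
    by_contra hfin
    have hinf : {j : κ | ¬ dist ‖A.comp (lpIncl e j)‖ 0 < ε}.Infinite := hfin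
    let jf := hinf.natEmbedding
    set j : ℕ → κ := fun n => (jf n).1 with hj
    have hjinj : Function.Injective j := fun a b h => jf.injective (Subtype.ext h)
    have hjε : ∀ n, ε ≤ ‖A.comp (lpIncl e (j n))‖ := by
      intro n
      have := (jf n).2
      simp only [Set.mem_setOf_eq, Real.dist_eq, sub_zero,
        abs_of_nonneg (norm_nonneg _), not_lt] at this
      exact this
    -- choose near-maximizing vectors
    have hv : ∀ n, ∃ v : EuclideanSpace ℂ (Fin (e (j n))), ‖v‖ < 1 ∧
        ε / 2 < ‖(A.comp (lpIncl e (j n))) v‖ := by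
      intro n
      exact (A.comp (lpIncl e (j n))).exists_lt_apply_of_lt_opNorm
        (lt_of_lt_of_le (half_lt_self hε) (hjε n))
    choose v hv1 hv2 using hv
    set u : ℕ → Hsp e := fun n => lpIncl e (j n) (v n) with hu
    have hincl_norm : ∀ (k : κ), ‖lpIncl e k‖ ≤ 1 := fun k =>
      LinearMap.mkContinuous_norm_le _ zero_le_one _
    have hu_norm : ∀ n, ‖u n‖ ≤ 1 := by
      intro n
      calc ‖u n‖ ≤ ‖lpIncl e (j n)‖ * ‖v n‖ := (lpIncl e (j n)).le_opNorm _
        _ ≤ 1 * 1 := mul_le_mul (hincl_norm _) (hv1 n).le (norm_nonneg _) zero_le_one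
        _ = 1 := one_mul 1
    -- compactness
    have hK : IsCompact (closure (⇑A '' Metric.closedBall 0 1)) :=
      hA.isCompact_closure_image_of_bounded Metric.isBounded_closedBall
    have hmem : ∀ n, A (u n) ∈ closure (⇑A '' Metric.closedBall 0 1) := fun n =>
      subset_closure ⟨u n, by simpa [Metric.mem_closedBall, dist_zero_right] using hu_norm n,
        rfl⟩
    have hsubseq := by
      set_option synthInstance.maxHeartbeats 1000000 in
      exact hK.tendsto_subseq hmem
    obtain ⟨y, -, φ, hφ, hlim⟩ := hsubseq
    have hAuφ : ∀ n, ε / 2 < ‖A (u (φ n))‖ := fun n => by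
      exact hv2 (φ n)
    have hynorm : ε / 2 ≤ ‖y‖ :=
      ge_of_tendsto (hlim.norm) (Filter.Eventually.of_forall fun n => (hAuφ n).le)
    have hy0 : y ≠ 0 := by
      intro h
      rw [h, norm_zero] at hynorm
      exact absurd hynorm (not_le.2 (half_pos hε))
    -- the adjoint applied to y
    set g : Hsp e := ContinuousLinearMap.adjoint A y with hg
    -- coordinates of g vanish along j
    have hg_sq : Filter.Tendsto (fun k : κ => ‖g k‖ ^ (2 : ℝ≥0∞).toReal)
        Filter.cofinite (nhds 0) := by
      have : Summable fun k : κ => ‖g k‖ ^ (2 : ℝ≥0∞).toReal :=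
        (lp.memℓp g).summable (by norm_num)
      exact this.tendsto_cofinite_zero
    have hjcof : Filter.Tendsto j Filter.atTop Filter.cofinite := by
      rw [← Nat.cofinite_eq_atTop]
      exact hjinj.tendsto_cofinite
    have hgj2 : Filter.Tendsto (fun n => ‖g (j n)‖ ^ (2 : ℝ≥0∞).toReal)
        Filter.atTop (nhds 0) := hg_sq.comp hjcof
    have hgj : Filter.Tendsto (fun n => ‖g (j n)‖) Filter.atTop (nhds 0) := by
      have hsq : Filter.Tendsto (fun n => Real.sqrt (‖g (j n)‖ ^ (2 : ℝ≥0∞).toReal))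
          Filter.atTop (nhds (Real.sqrt 0)) :=
        (Real.continuous_sqrt.tendsto 0).comp hgj2
      rw [Real.sqrt_zero] at hsq
      convert hsq using 2 with n
      rw [ENNReal.toReal_ofNat, Real.rpow_two, Real.sqrt_sq (norm_nonneg _)]
    -- inner product argument
    have hinner_lim : Filter.Tendsto (fun n => (inner ℂ y (A (u (φ n))) : ℂ))
        Filter.atTop (nhds (inner ℂ y y)) :=
      Filter.Tendsto.inner tendsto_const_nhds hlim
    have hinner_eq : ∀ n, (inner ℂ y (A (u n)) : ℂ) = inner ℂ (g (j n)) (v n) := by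
      intro n
      rw [← ContinuousLinearMap.adjoint_inner_left A (u n) y, ← hg]
      exact lp.inner_single_right (𝕜 := ℂ) (j n) (v n) g
    have hinner_zero : Filter.Tendsto (fun n => (inner ℂ y (A (u (φ n))) : ℂ))
        Filter.atTop (nhds 0) := by
      rw [tendsto_zero_iff_norm_tendsto_zero]
      apply tendsto_of_tendsto_of_tendsto_of_le_of_le
        (tendsto_const_nhds (x := (0:ℝ))) (hgj.comp (hφ.tendsto_atTop))
        (fun n => norm_nonneg _)
      intro n
      show ‖(inner ℂ y (A (u (φ n))) : ℂ)‖ ≤ ‖g (j (φ n))‖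
      rw [hinner_eq (φ n)]
      calc ‖(inner ℂ (g (j (φ n))) (v (φ n)) : ℂ)‖ ≤ ‖g (j (φ n))‖ * ‖v (φ n)‖ :=
            norm_inner_le_norm _ _
        _ ≤ ‖g (j (φ n))‖ * 1 :=
            mul_le_mul_of_nonneg_left (hv1 (φ n)).le (norm_nonneg _)
        _ = ‖g (j (φ n))‖ := mul_one _
    have : (inner ℂ y y : ℂ) = 0 := tendsto_nhds_unique hinner_lim hinner_zero
    exact hy0 (inner_self_eq_zero.mp this)
  refine ⟨key, ?_⟩
  have hproj : ∀ i : ι, ‖lpProj d i‖ ≤ 1 := fun i =>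
    LinearMap.mkContinuous_norm_le _ zero_le_one _
  apply tendsto_of_tendsto_of_tendsto_of_le_of_le (tendsto_const_nhds (x := (0:ℝ))) key
  · intro j
    exact Real.iSup_nonneg fun i => norm_nonneg _
  · intro j
    apply Real.iSup_le _ (norm_nonneg _)
    intro i
    calc ‖(lpProj d i).comp (A.comp (lpIncl e j))‖
        ≤ ‖lpProj d i‖ * ‖A.comp (lpIncl e j)‖ := ContinuousLinearMap.opNorm_comp_le _ _
      _ ≤ 1 * ‖A.comp (lpIncl e j)‖ :=
          mul_le_mul_of_nonneg_right (hproj i) (norm_nonneg _)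
      _ = ‖A.comp (lpIncl e j)‖ := one_mul _
end

section
/- Let ι and κ be countable index types, d : ι → ℕ and e : κ → ℕ, λ : ι → ℝ and σ : κ → ℝ nonnegative, and m, n, M ≥ 0 reals. Let A : H(e) → H(d) be a bounded operator whose blocks T_{ij} := P_i ∘ A ∘ ι_j satisfy ‖T_{ij}‖ ≤ M (1 + λ i)^(−m/2) (1 + σ j)^(−n/2), and suppose S := Σ_{i,j} (d i)(e j)(1 + λ i)^(−m)(1 + σ j)^(−n) < ∞. Then, for the canonical orthonormal basis {f_{j,r}} of H(e), Σ_{j,r} ‖A f_{j,r}‖² ≤ M² S; in particular A is a Hilbert–Schmidt (hence compact) operator. -/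
open scoped ENNReal

noncomputable section AuxHS

variable {κ : Type*} (e : κ → ℕ)

/-- The canonical orthonormal family in `Hsp e`. -/
def stdVec (p : (Σ j, Fin (e j))) : Hsp e := lpIncl e p.1 (EuclideanSpace.single p.2 (1 : ℂ))

lemma lpIncl_coe {α : Type*} (d : α → ℕ) (j : α) (w : EuclideanSpace ℂ (Fin (d j))) :
    letI := Classical.decEq α
    lpIncl d j w = lp.single 2 j w := rfl

lemma euclid_sum_single {n : ℕ} (w : EuclideanSpace ℂ (Fin n)) :
    ∑ r : Fin n, w r • EuclideanSpace.single r (1 : ℂ) = w := by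
  classical
  have h := (EuclideanSpace.basisFun (Fin n) ℂ).sum_repr w
  simpa only [EuclideanSpace.basisFun_repr, EuclideanSpace.basisFun_apply] using h

lemma stdVec_orthonormal : Orthonormal ℂ (stdVec e) := by
  letI := Classical.decEq κ
  rw [orthonormal_iff_ite]
  rintro ⟨j, r⟩ ⟨j', r'⟩
  rw [stdVec, stdVec, lpIncl_coe, lpIncl_coe, lp.inner_single_left]
  rcases eq_or_ne j j' with rfl | hj
  · rw [lp.single_apply_self, EuclideanSpace.inner_single_left]
    simp [EuclideanSpace.single_apply, Sigma.mk.inj_iff, eq_comm]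
  · rw [lp.single_apply_ne 2 j' _ hj]
    simp [Sigma.mk.inj_iff, hj]

lemma stdVec_dense :
    ⊤ ≤ (Submodule.span ℂ (Set.range (stdVec e))).topologicalClosure := by
  letI := Classical.decEq κ
  intro x _
  have hx : HasSum (fun j => lp.single 2 j (x j)) x :=
    lp.hasSum_single (by norm_num) x
  have hmem : ∀ s : Finset κ,
      (∑ j ∈ s, lp.single 2 j (x j)) ∈ Submodule.span ℂ (Set.range (stdVec e)) := by
    intro s
    refine Submodule.sum_mem _ fun j _ => ?_
    have : (∑ r : Fin (e j), (x j r) • stdVec e ⟨j, r⟩) = lp.single 2 j (x j) := by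
      calc (∑ r : Fin (e j), (x j r) • stdVec e ⟨j, r⟩)
          = ∑ r : Fin (e j), lpIncl e j ((x j r) • EuclideanSpace.single r (1 : ℂ)) := by
            simp only [stdVec, map_smul]
        _ = lpIncl e j (∑ r : Fin (e j), (x j r) • EuclideanSpace.single r (1 : ℂ)) :=
            (map_sum _ _ _).symm
        _ = lpIncl e j (x j) := by rw [euclid_sum_single]
        _ = lp.single 2 j (x j) := rfl
    rw [← this]
    exact Submodule.sum_mem _ fun r _ =>
      Submodule.smul_mem _ _ (Submodule.subset_span ⟨⟨j, r⟩, rfl⟩)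
  exact mem_closure_of_tendsto hx (Filter.Eventually.of_forall hmem)

/-- The canonical Hilbert basis of `Hsp e`. -/
def stdBasis : HilbertBasis (Σ j, Fin (e j)) ℂ (Hsp e) :=
  HilbertBasis.mk (stdVec_orthonormal e) (stdVec_dense e)

lemma stdBasis_coe : ⇑(stdBasis e) = stdVec e :=
  HilbertBasis.coe_mk _ _

end AuxHS

noncomputable section Aux2

open scoped InnerProductSpace

lemma nnnorm_sq_eq_tsum_hsp {α : Type*} {d : α → ℕ} (f : Hsp d) :
    (‖f‖₊ : ℝ≥0∞) ^ 2 = ∑' i, (‖f i‖₊ : ℝ≥0∞) ^ 2 := by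
  have h := lp.norm_rpow_eq_tsum (p := 2) (by norm_num) f
  have htr : ((2 : ℝ≥0∞).toReal) = (2 : ℝ) := by norm_num
  rw [htr] at h
  have hsumm : Summable (fun i => ‖f i‖ ^ (2 : ℝ)) := by
    have := (lp.memℓp f).summable (p := 2) (by norm_num)
    simpa [htr] using this
  have h2 : ∀ x : ℝ, 0 ≤ x → x ^ (2 : ℝ) = x ^ (2 : ℕ) := by
    intro x hx
    rw [← Real.rpow_natCast x 2]
    norm_num
  calc (‖f‖₊ : ℝ≥0∞) ^ 2 = ENNReal.ofReal (‖f‖ ^ (2 : ℕ)) := by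
        rw [ENNReal.ofReal_pow (norm_nonneg _)]; exact congrArg (fun x : ℝ≥0∞ => x ^ 2) (ofReal_norm _).symm
    _ = ENNReal.ofReal (∑' i, ‖f i‖ ^ (2 : ℝ)) := by rw [← h, h2 _ (norm_nonneg _)]
    _ = ∑' i, ENNReal.ofReal (‖f i‖ ^ (2 : ℝ)) :=
        ENNReal.ofReal_tsum_of_nonneg (fun i => Real.rpow_nonneg (norm_nonneg _) _) hsumm
    _ = ∑' i, (‖f i‖₊ : ℝ≥0∞) ^ 2 := by
        refine tsum_congr fun i => ?_
        rw [h2 _ (norm_nonneg _), ENNReal.ofReal_pow (norm_nonneg _)]; exact congrArg (fun x : ℝ≥0∞ => x ^ 2) (ofReal_norm _)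

lemma opNorm_le_sqrt_of_hilbertBasis {E F : Type*} [NormedAddCommGroup E]
    [InnerProductSpace ℂ E] [CompleteSpace E] [NormedAddCommGroup F] [InnerProductSpace ℂ F]
    {I : Type*} (b : HilbertBasis I ℂ E) (T : E →L[ℂ] F) {c : ℝ}
    (h : ∀ s : Finset I, ∑ p ∈ s, ‖T (b p)‖ ^ 2 ≤ c) :
    ‖T‖ ≤ Real.sqrt c := by
  refine T.opNorm_le_bound (Real.sqrt_nonneg c) fun x => ?_
  have hx : HasSum (fun i => b.repr x i • T (b i)) (T x) := by
    simpa only [map_smul] using (b.hasSum_repr x).mapL T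
  refine le_of_tendsto ((continuous_norm.tendsto _).comp hx)
    (Filter.Eventually.of_forall fun s => ?_)
  have h1 : ‖∑ i ∈ s, b.repr x i • T (b i)‖ ≤ ∑ i ∈ s, ‖b.repr x i‖ * ‖T (b i)‖ := by
    refine (norm_sum_le _ _).trans (le_of_eq ?_)
    simp [norm_smul]
  have h2 := Real.sum_mul_le_sqrt_mul_sqrt s (fun i => ‖b.repr x i‖) (fun i => ‖T (b i)‖)
  have h3 : ∑ i ∈ s, ‖b.repr x i‖ ^ 2 ≤ ‖x‖ ^ 2 := by
    have hO := b.orthonormal.sum_inner_products_le (s := s) x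
    have : ∀ i, ‖b.repr x i‖ = ‖⟪b i, x⟫_ℂ‖ := fun i => by rw [b.repr_apply_apply]
    calc ∑ i ∈ s, ‖b.repr x i‖ ^ 2 = ∑ i ∈ s, ‖⟪b i, x⟫_ℂ‖ ^ 2 := by
          exact Finset.sum_congr rfl fun i _ => by rw [this i]
      _ ≤ ‖x‖ ^ 2 := hO
  have h4 : Real.sqrt (∑ i ∈ s, ‖b.repr x i‖ ^ 2) ≤ ‖x‖ := by
    rw [show ‖x‖ = Real.sqrt (‖x‖ ^ 2) by rw [Real.sqrt_sq (norm_nonneg x)]]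
    exact Real.sqrt_le_sqrt h3
  have h5 : Real.sqrt (∑ i ∈ s, ‖T (b i)‖ ^ 2) ≤ Real.sqrt c := Real.sqrt_le_sqrt (h s)
  calc ‖(Finset.sum s fun i => b.repr x i • T (b i))‖
      ≤ ∑ i ∈ s, ‖b.repr x i‖ * ‖T (b i)‖ := h1
    _ ≤ Real.sqrt (∑ i ∈ s, ‖b.repr x i‖ ^ 2) * Real.sqrt (∑ i ∈ s, ‖T (b i)‖ ^ 2) := h2
    _ ≤ ‖x‖ * Real.sqrt c :=
        mul_le_mul h4 h5 (Real.sqrt_nonneg _) (norm_nonneg x)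
    _ = Real.sqrt c * ‖x‖ := mul_comm _ _

lemma isCompactOperator_of_finiteDimensionalRange
    {E F : Type*} [NormedAddCommGroup E] [NormedSpace ℂ E] [NormedAddCommGroup F]
    [NormedSpace ℂ F] (T : E →L[ℂ] F) (h : FiniteDimensional ℂ (LinearMap.range (T : E →ₗ[ℂ] F))) :
    IsCompactOperator ⇑T := by
  rw [isCompactOperator_iff_exists_mem_nhds_image_subset_compact]
  haveI := h
  refine ⟨Metric.closedBall 0 1, Metric.closedBall_mem_nhds 0 one_pos,
    Subtype.val '' (Metric.closedBall (0 : LinearMap.range (T : E →ₗ[ℂ] F)) ‖T‖), ?_, ?_⟩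
  · exact (isCompact_closedBall _ _).image continuous_subtype_val
  · rintro y ⟨x, hx, rfl⟩
    refine ⟨⟨T x, LinearMap.mem_range_self _ x⟩, ?_, rfl⟩
    rw [Metric.mem_closedBall, dist_zero_right]
    show ‖T x‖ ≤ ‖T‖
    calc ‖T x‖ ≤ ‖T‖ * ‖x‖ := T.le_opNorm x
      _ ≤ ‖T‖ * 1 := by
          refine mul_le_mul_of_nonneg_left ?_ (norm_nonneg _)
          simpa [dist_zero_right] using hx
      _ = ‖T‖ := mul_one _

end Aux2


set_option maxHeartbeats 1000000

/-- Symbolic Schatten estimate for p = 2: polynomially decaying blocks with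
summable weighted dimensions give a Hilbert–Schmidt, hence compact, operator. -/
theorem symbolic_hilbertSchmidt_estimate
    {ι κ : Type*} [Countable ι] [Countable κ]
    (d : ι → ℕ) (e : κ → ℕ)
    (lam : ι → ℝ) (sig : κ → ℝ) (hlam : ∀ i, 0 ≤ lam i) (hsig : ∀ j, 0 ≤ sig j)
    (m n M : ℝ) (hm : 0 ≤ m) (hn : 0 ≤ n) (hM : 0 ≤ M)
    (A : Hsp e →L[ℂ] Hsp d)
    (hT : ∀ (i : ι) (j : κ), ‖(lpProj d i).comp (A.comp (lpIncl e j))‖ ≤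
      M * (1 + lam i) ^ (-m / 2) * (1 + sig j) ^ (-n / 2))
    (S : ℝ)
    (hS : HasSum (fun p : ι × κ =>
      (d p.1 : ℝ) * (e p.2 : ℝ) * (1 + lam p.1) ^ (-m) * (1 + sig p.2) ^ (-n)) S) :
    (∑' (j : κ) (r : Fin (e j)),
        (‖A (lpIncl e j (EuclideanSpace.single r (1 : ℂ)))‖₊ : ℝ≥0∞) ^ 2)
      ≤ ENNReal.ofReal (M ^ 2 * S) ∧
    IsCompactOperator (⇑A) := by
  classical
  set α : ι → ℝ := fun i => (1 + lam i) ^ (-m / 2) with hα_def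
  set β : κ → ℝ := fun j => (1 + sig j) ^ (-n / 2) with hβ_def
  have hα0 : ∀ i, 0 ≤ α i := fun i => Real.rpow_nonneg (by linarith [hlam i]) _
  have hβ0 : ∀ j, 0 ≤ β j := fun j => Real.rpow_nonneg (by linarith [hsig j]) _
  have hαsq : ∀ i, (1 + lam i) ^ (-m) = α i ^ 2 := by
    intro i
    have hx : (0:ℝ) ≤ 1 + lam i := by linarith [hlam i]
    rw [hα_def]
    rw [← Real.rpow_natCast ((1 + lam i) ^ (-m / 2)) 2, ← Real.rpow_mul hx]
    norm_num
  have hβsq : ∀ j, (1 + sig j) ^ (-n) = β j ^ 2 := by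
    intro j
    have hx : (0:ℝ) ≤ 1 + sig j := by linarith [hsig j]
    rw [hβ_def]
    rw [← Real.rpow_natCast ((1 + sig j) ^ (-n / 2)) 2, ← Real.rpow_mul hx]
    norm_num
  -- pointwise block estimate
  have hptw : ∀ (i : ι) (j : κ) (r : Fin (e j)),
      ‖(A (lpIncl e j (EuclideanSpace.single r (1 : ℂ))) :
          ∀ i', EuclideanSpace ℂ (Fin (d i'))) i‖ ≤ M * α i * β j := by
    intro i j r
    have h1 : (A (lpIncl e j (EuclideanSpace.single r (1 : ℂ))) :
          ∀ i', EuclideanSpace ℂ (Fin (d i'))) i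
        = ((lpProj d i).comp (A.comp (lpIncl e j))) (EuclideanSpace.single r (1 : ℂ)) := rfl
    rw [h1]
    calc ‖((lpProj d i).comp (A.comp (lpIncl e j))) (EuclideanSpace.single r (1 : ℂ))‖
        ≤ ‖(lpProj d i).comp (A.comp (lpIncl e j))‖ * ‖EuclideanSpace.single r (1 : ℂ)‖ :=
          ContinuousLinearMap.le_opNorm _ _
      _ = ‖(lpProj d i).comp (A.comp (lpIncl e j))‖ := by
          rw [EuclideanSpace.norm_single, norm_one, mul_one]
      _ ≤ M * α i * β j := hT i j
  have hpt2 : ∀ (i : ι) (j : κ) (r : Fin (e j)),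
      ((‖(A (lpIncl e j (EuclideanSpace.single r (1 : ℂ))) :
          ∀ i', EuclideanSpace ℂ (Fin (d i'))) i‖₊ : ℝ≥0∞)) ^ 2
        ≤ (d i : ℝ≥0∞) * ENNReal.ofReal ((M * α i * β j) ^ 2) := by
    intro i j r
    rcases Nat.eq_zero_or_pos (d i) with h0 | hpos
    · have hz : ‖(A (lpIncl e j (EuclideanSpace.single r (1 : ℂ))) :
          ∀ i', EuclideanSpace ℂ (Fin (d i'))) i‖ = 0 := by
        haveI : IsEmpty (Fin (d i)) := by rw [h0]; infer_instance
        rw [EuclideanSpace.norm_eq]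
        simp
      refine (congrArg (fun x : ℝ≥0∞ => x ^ 2) (ofReal_norm _)).symm.trans_le ?_; rw [hz]
      simp
    · have hb := hptw i j r
      have h1 : ((‖(A (lpIncl e j (EuclideanSpace.single r (1 : ℂ))) :
          ∀ i', EuclideanSpace ℂ (Fin (d i'))) i‖₊ : ℝ≥0∞)) ^ 2
          ≤ ENNReal.ofReal ((M * α i * β j) ^ 2) := by
        refine (congrArg (fun x : ℝ≥0∞ => x ^ 2) (ofReal_norm _)).symm.trans_le ?_
        rw [← ENNReal.ofReal_pow (norm_nonneg _)]
        exact ENNReal.ofReal_le_ofReal (pow_le_pow_left₀ (norm_nonneg _) hb 2)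
      refine h1.trans (le_mul_of_one_le_left (by positivity) ?_)
      exact_mod_cast Nat.one_le_cast.mpr hpos
  have hjr : ∀ (j : κ) (r : Fin (e j)),
      (‖A (lpIncl e j (EuclideanSpace.single r (1 : ℂ)))‖₊ : ℝ≥0∞) ^ 2
        ≤ ∑' i, (d i : ℝ≥0∞) * ENNReal.ofReal ((M * α i * β j) ^ 2) := by
    intro j r
    rw [nnnorm_sq_eq_tsum_hsp]
    exact ENNReal.tsum_le_tsum (fun i => hpt2 i j r)
  -- the right-hand side as an iterated sum
  have hterm0 : ∀ p : ι × κ, 0 ≤ M ^ 2 *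
      ((d p.1 : ℝ) * (e p.2 : ℝ) * (1 + lam p.1) ^ (-m) * (1 + sig p.2) ^ (-n)) := by
    intro p
    have h1 : (0:ℝ) ≤ (1 + lam p.1) ^ (-m) := Real.rpow_nonneg (by linarith [hlam p.1]) _
    have h2 : (0:ℝ) ≤ (1 + sig p.2) ^ (-n) := Real.rpow_nonneg (by linarith [hsig p.2]) _
    positivity
  have hS' : HasSum (fun p : ι × κ => M ^ 2 *
      ((d p.1 : ℝ) * (e p.2 : ℝ) * (1 + lam p.1) ^ (-m) * (1 + sig p.2) ^ (-n))) (M ^ 2 * S) :=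
    hS.mul_left _
  have hofReal : ENNReal.ofReal (M ^ 2 * S) = ∑' p : ι × κ, ENNReal.ofReal (M ^ 2 *
      ((d p.1 : ℝ) * (e p.2 : ℝ) * (1 + lam p.1) ^ (-m) * (1 + sig p.2) ^ (-n))) := by
    rw [← hS'.tsum_eq]
    exact ENNReal.ofReal_tsum_of_nonneg hterm0 hS'.summable
  have hpoint : ∀ (i : ι) (j : κ), ENNReal.ofReal (M ^ 2 *
      ((d i : ℝ) * (e j : ℝ) * (1 + lam i) ^ (-m) * (1 + sig j) ^ (-n)))
      = (e j : ℝ≥0∞) * ((d i : ℝ≥0∞) * ENNReal.ofReal ((M * α i * β j) ^ 2)) := by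
    intro i j
    have hreal : M ^ 2 * ((d i : ℝ) * (e j : ℝ) * (1 + lam i) ^ (-m) * (1 + sig j) ^ (-n))
        = (e j : ℝ) * ((d i : ℝ) * (M * α i * β j) ^ 2) := by
      rw [hαsq i, hβsq j]; ring
    rw [hreal, ENNReal.ofReal_mul (by positivity), ENNReal.ofReal_mul (by positivity),
      ENNReal.ofReal_natCast, ENNReal.ofReal_natCast]
  have part1 : (∑' (j : κ) (r : Fin (e j)),
      (‖A (lpIncl e j (EuclideanSpace.single r (1 : ℂ)))‖₊ : ℝ≥0∞) ^ 2)
      ≤ ENNReal.ofReal (M ^ 2 * S) := by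
    have c4 : ENNReal.ofReal (M ^ 2 * S)
        = ∑' (j : κ), ∑' (i : ι), (e j : ℝ≥0∞) *
            ((d i : ℝ≥0∞) * ENNReal.ofReal ((M * α i * β j) ^ 2)) :=
      calc ENNReal.ofReal (M ^ 2 * S)
          = ∑' p : ι × κ, ENNReal.ofReal (M ^ 2 *
            ((d p.1 : ℝ) * (e p.2 : ℝ) * (1 + lam p.1) ^ (-m) * (1 + sig p.2) ^ (-n))) :=
          hofReal
        _ = ∑' (i : ι), ∑' (j : κ), ENNReal.ofReal (M ^ 2 *
            ((d i : ℝ) * (e j : ℝ) * (1 + lam i) ^ (-m) * (1 + sig j) ^ (-n))) :=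
          ENNReal.tsum_prod (f := fun i j => ENNReal.ofReal (M ^ 2 *
            ((d i : ℝ) * (e j : ℝ) * (1 + lam i) ^ (-m) * (1 + sig j) ^ (-n))))
        _ = ∑' (j : κ), ∑' (i : ι), ENNReal.ofReal (M ^ 2 *
            ((d i : ℝ) * (e j : ℝ) * (1 + lam i) ^ (-m) * (1 + sig j) ^ (-n))) :=
          ENNReal.tsum_comm
        _ = _ := tsum_congr fun j => tsum_congr fun i => hpoint i j
    calc (∑' (j : κ) (r : Fin (e j)),
        (‖A (lpIncl e j (EuclideanSpace.single r (1 : ℂ)))‖₊ : ℝ≥0∞) ^ 2)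
        ≤ ∑' (j : κ) (_r : Fin (e j)), ∑' i, (d i : ℝ≥0∞) *
            ENNReal.ofReal ((M * α i * β j) ^ 2) :=
          ENNReal.tsum_le_tsum fun j => ENNReal.tsum_le_tsum fun r => hjr j r
      _ = ∑' (j : κ), (e j : ℝ≥0∞) * ∑' i, (d i : ℝ≥0∞) *
            ENNReal.ofReal ((M * α i * β j) ^ 2) := by
          refine tsum_congr fun j => ?_
          rw [tsum_fintype]
          simp [Finset.sum_const, Finset.card_univ, Fintype.card_fin, nsmul_eq_mul]
      _ = ∑' (j : κ), ∑' (i : ι), (e j : ℝ≥0∞) *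
            ((d i : ℝ≥0∞) * ENNReal.ofReal ((M * α i * β j) ^ 2)) :=
          tsum_congr fun j => ENNReal.tsum_mul_left.symm
      _ = ENNReal.ofReal (M ^ 2 * S) := c4.symm
  refine ⟨part1, ?_⟩
  -- Part 2: compactness
  have hSigNe : (∑' (p : (Σ j, Fin (e j))), (‖A (stdVec e p)‖₊ : ℝ≥0∞) ^ 2) ≠ ⊤ := by
    rw [ENNReal.tsum_sigma']
    exact ne_top_of_le_ne_top (lt_of_le_of_lt part1 ENNReal.ofReal_lt_top).ne
      (le_of_eq (tsum_congr fun j => tsum_congr fun r => rfl))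
  have hg : Summable (fun p : (Σ j, Fin (e j)) => ‖A (stdVec e p)‖ ^ 2) := by
    have h1 : Summable (fun p : (Σ j, Fin (e j)) => (‖A (stdVec e p)‖₊ ^ 2 : NNReal)) := by
      rw [← ENNReal.tsum_coe_ne_top_iff_summable]
      simpa [ENNReal.coe_pow] using hSigNe
    have h2 := NNReal.summable_coe.mpr h1
    simpa using h2
  set g : (Σ j, Fin (e j)) → ℝ := fun p => ‖A (stdVec e p)‖ ^ 2 with hgdef
  set b := stdBasis e with hbdef
  have hb : ⇑b = stdVec e := stdBasis_coe e
  set Q : Finset (Σ j, Fin (e j)) → (Hsp e →L[ℂ] Hsp e) :=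
    fun s => ∑ p ∈ s, (innerSL ℂ (stdVec e p)).smulRight (stdVec e p) with hQdef
  have hQapp : ∀ (s : Finset (Σ j, Fin (e j))) (x : Hsp e),
      Q s x = ∑ p ∈ s, (inner ℂ (stdVec e p) x : ℂ) • stdVec e p := by
    intro s x
    rw [hQdef]
    simp [ContinuousLinearMap.sum_apply]
  have hcpt : ∀ s, IsCompactOperator ⇑(A.comp (Q s)) := by
    intro s
    apply isCompactOperator_of_finiteDimensionalRange
    have hle : LinearMap.range ((A.comp (Q s)) : Hsp e →ₗ[ℂ] Hsp d)
        ≤ Submodule.span ℂ ((fun p => A (stdVec e p)) '' ↑s) := by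
      intro y hy
      obtain ⟨x, rfl⟩ := LinearMap.mem_range.mp hy
      show A (Q s x) ∈ _
      rw [hQapp, map_sum]
      refine Submodule.sum_mem _ fun p hp => ?_
      rw [map_smul]
      exact Submodule.smul_mem _ _ (Submodule.subset_span ⟨p, hp, rfl⟩)
    haveI : FiniteDimensional ℂ (Submodule.span ℂ ((fun p => A (stdVec e p)) '' ↑s)) :=
      FiniteDimensional.span_of_finite ℂ (s.finite_toSet.image _)
    exact Submodule.finiteDimensional_of_le hle
  have hQv : ∀ (s : Finset (Σ j, Fin (e j))) (q), Q s (stdVec e q) =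
      if q ∈ s then stdVec e q else 0 := by
    intro s q
    rw [hQapp]
    have hon := stdVec_orthonormal e
    rw [orthonormal_iff_ite] at hon
    have hcongr : ∀ p ∈ s, (inner ℂ (stdVec e p) (stdVec e q) : ℂ) • stdVec e p
        = if p = q then stdVec e p else 0 := by
      intro p _
      rw [hon p q]
      by_cases h : p = q <;> simp [h]
    rw [Finset.sum_congr rfl hcongr, Finset.sum_ite_eq' s q]
  have hdiff : ∀ (s : Finset (Σ j, Fin (e j))) (q), (A - A.comp (Q s)) (stdVec e q)
      = if q ∈ s then 0 else A (stdVec e q) := by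
    intro s q
    rw [ContinuousLinearMap.sub_apply, ContinuousLinearMap.comp_apply, hQv]
    by_cases h : q ∈ s <;> simp [h]
  have hbound : ∀ s : Finset (Σ j, Fin (e j)), ‖A - A.comp (Q s)‖
      ≤ Real.sqrt (∑' q, Set.indicator {x | x ∉ s} g q) := by
    intro s
    apply opNorm_le_sqrt_of_hilbertBasis b
    intro u
    have hpt : ∀ q, ‖(A - A.comp (Q s)) (b q)‖ ^ 2 = Set.indicator {x | x ∉ s} g q := by
      intro q
      rw [hb, hdiff]
      by_cases h : q ∈ s
      · simp [h, Set.indicator, hgdef]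
      · simp [h, Set.indicator, hgdef]
    rw [Finset.sum_congr rfl fun q _ => hpt q]
    exact Summable.sum_le_tsum u (fun q _ => Set.indicator_nonneg (fun x _ => sq_nonneg _) q)
      (hg.indicator _)
  have htail : Filter.Tendsto
      (fun s : Finset (Σ j, Fin (e j)) => ∑' q, Set.indicator {x | x ∉ s} g q)
      Filter.atTop (nhds 0) := by
    refine (tendsto_tsum_compl_atTop_zero g).congr fun s => ?_
    exact tsum_subtype {x | x ∉ s} g
  have hsqrt : Filter.Tendsto
      (fun s : Finset (Σ j, Fin (e j)) =>
        Real.sqrt (∑' q, Set.indicator {x | x ∉ s} g q)) Filter.atTop (nhds 0) := by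
    have := (Real.continuous_sqrt.tendsto 0).comp htail
    simpa [Function.comp_def, Real.sqrt_zero] using this
  have hnorm0 : Filter.Tendsto (fun s => ‖A.comp (Q s) - A‖) Filter.atTop (nhds 0) := by
    refine squeeze_zero (fun s => norm_nonneg _) (fun s => ?_) hsqrt
    rw [norm_sub_rev]
    exact hbound s
  have hconv : Filter.Tendsto (fun s => A.comp (Q s)) Filter.atTop (nhds A) := by
    rw [tendsto_iff_norm_sub_tendsto_zero]
    exact hnorm0
  exact isCompactOperator_of_tendsto hconv (Filter.Eventually.of_forall hcpt)
end

section
/- Let ι be a countable index type, d, e : ι → ℕ, and let T i : EuclideanSpace ℂ (Fin (e i)) →L[ℂ] EuclideanSpace ℂ (Fin (d i)) be a family with sup_i ‖T i‖ < ∞, and let A : H(e) → H(d) be the bounded block-diagonal operator with (A x) i = T i (x i). Suppose there is a finite set S ⊆ ι such that for every i ∉ S the block T i is bijective, and sup_{i ∉ S} ‖(T i)⁻¹‖ < ∞. Then A is Fredholm in the sense that: the kernel of A is finite-dimensional, the range of A is a closed subspace of H(d), and the quotient H(d) / range(A) is finite-dimensional. -/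
open scoped ENNReal

set_option maxHeartbeats 1000000 in
/-- Fredholm criterion for block-diagonal operators: if all but finitely many
blocks are bijective with uniformly bounded inverses, the operator is Fredholm. -/
theorem blockDiagonal_fredholm
    {ι : Type*} [Countable ι] (d e : ι → ℕ)
    (T : ∀ i : ι, EuclideanSpace ℂ (Fin (e i)) →L[ℂ] EuclideanSpace ℂ (Fin (d i)))
    (hbdd : BddAbove (Set.range fun i : ι => ‖T i‖))
    (A : Hsp e →L[ℂ] Hsp d)
    (hA : ∀ (x : Hsp e) (i : ι), (A x) i = T i (x i))
    (S : Finset ι)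
    (hbij : ∀ i ∉ S, Function.Bijective (T i))
    (hinv : ∃ C : ℝ, ∀ i ∉ S, ∀ v : EuclideanSpace ℂ (Fin (e i)), ‖v‖ ≤ C * ‖T i v‖) :
    FiniteDimensional ℂ (LinearMap.ker (A : Hsp e →ₗ[ℂ] Hsp d)) ∧
    IsClosed ((LinearMap.range (A : Hsp e →ₗ[ℂ] Hsp d) : Submodule ℂ (Hsp d)) : Set (Hsp d)) ∧
    FiniteDimensional ℂ (Hsp d ⧸ LinearMap.range (A : Hsp e →ₗ[ℂ] Hsp d)) := by
  classical
  obtain ⟨C, hC⟩ := hinv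
  set C' : ℝ := max C 0 with hC'def
  have hC'nn : 0 ≤ C' := le_max_right _ _
  have hCb : ∀ i ∉ S, ∀ v : EuclideanSpace ℂ (Fin (e i)), ‖v‖ ≤ C' * ‖T i v‖ := fun i hi v =>
    (hC i hi v).trans (mul_le_mul_of_nonneg_right (le_max_left _ _) (norm_nonneg _))
  have h2 : (2 : ℝ≥0∞).toReal = 2 := by norm_num
  have h2pos : 0 < (2 : ℝ≥0∞).toReal := by norm_num
  -- range characterization
  have hmem : ∀ y : Hsp d, y ∈ LinearMap.range (A : Hsp e →ₗ[ℂ] Hsp d) ↔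
      ∀ i ∈ S, ∃ v, T i v = y i := by
    intro y
    constructor
    · rintro ⟨x, rfl⟩ i _
      exact ⟨x i, (hA x i).symm⟩
    · intro hy
      have hy' : ∀ i, ∃ v, T i v = y i := by
        intro i
        by_cases h : i ∈ S
        · exact hy i h
        · exact (hbij i h).2 (y i)
      set x0 : ∀ i, EuclideanSpace ℂ (Fin (e i)) := fun i => (hy' i).choose with hx0def
      have hx0 : ∀ i, T i (x0 i) = y i := fun i => (hy' i).choose_spec
      have hle : ∀ i ∉ S, ‖x0 i‖ ≤ C' * ‖y i‖ := by
        intro i hi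
        have := hCb i hi (x0 i)
        rwa [hx0 i] at this
      -- summability
      have hky : Summable fun i => ‖y i‖ ^ (2 : ℝ) := by
        have := (memℓp_gen_iff h2pos).1 (lp.memℓp y)
        rwa [h2] at this
      have hk : Summable fun i => C' ^ (2 : ℝ) * ‖y i‖ ^ (2 : ℝ) := hky.mul_left _
      set g : ι → ℝ := fun i => if i ∈ S then ‖x0 i‖ ^ (2 : ℝ)
          else C' ^ (2 : ℝ) * ‖y i‖ ^ (2 : ℝ) with hgdef
      have hgs : Summable g := by
        have hsub : Summable fun i => g i - C' ^ (2 : ℝ) * ‖y i‖ ^ (2 : ℝ) := by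
          apply summable_of_ne_finset_zero (s := S)
          intro i hi
          simp [hgdef, if_neg hi]
        have : g = fun i => (g i - C' ^ (2 : ℝ) * ‖y i‖ ^ (2 : ℝ)) +
            C' ^ (2 : ℝ) * ‖y i‖ ^ (2 : ℝ) := by funext i; ring
        rw [this]
        exact hsub.add hk
      have hxmem : Memℓp x0 2 := by
        apply memℓp_gen
        rw [h2]
        apply Summable.of_nonneg_of_le (fun i => Real.rpow_nonneg (norm_nonneg _) _) _ hgs
        intro i
        by_cases h : i ∈ S
        · simp [hgdef, if_pos h]
        · have h1 : ‖x0 i‖ ^ (2 : ℝ) ≤ (C' * ‖y i‖) ^ (2 : ℝ) :=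
            Real.rpow_le_rpow (norm_nonneg _) (hle i h) (by norm_num)
          rw [Real.mul_rpow hC'nn (norm_nonneg _)] at h1
          simpa [hgdef, if_neg h] using h1
      refine ⟨⟨x0, hxmem⟩, ?_⟩
      apply lp.ext
      funext i
      have : (A ⟨x0, hxmem⟩) i = T i (x0 i) := hA ⟨x0, hxmem⟩ i
      simpa [hx0 i] using this
  refine ⟨?_, ?_, ?_⟩
  · -- kernel finite dimensional
    let f : (LinearMap.ker (A : Hsp e →ₗ[ℂ] Hsp d)) →ₗ[ℂ]
        (∀ i : S, EuclideanSpace ℂ (Fin (e i.1))) :=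
      { toFun := fun x => fun i => (x : Hsp e) i.1
        map_add' := fun x y => by funext i; simp [lp.coeFn_add]
        map_smul' := fun c x => by funext i; simp [lp.coeFn_smul] }
    have hf : Function.Injective f := by
      intro x y hxy
      apply Subtype.ext
      apply lp.ext
      funext i
      by_cases h : i ∈ S
      · exact congrFun hxy ⟨i, h⟩
      · have hx : (A (x : Hsp e)) i = 0 := by
          have := x.2
          simp only [LinearMap.mem_ker, ContinuousLinearMap.coe_coe] at this
          rw [this]; rfl
        have hy : (A (y : Hsp e)) i = 0 := by
          have := y.2
          simp only [LinearMap.mem_ker, ContinuousLinearMap.coe_coe] at this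
          rw [this]; rfl
        rw [hA] at hx hy
        have hx' : (x : Hsp e) i = 0 := (hbij i h).1 (by rw [hx, map_zero])
        have hy' : (y : Hsp e) i = 0 := (hbij i h).1 (by rw [hy, map_zero])
        rw [hx', hy']
    exact FiniteDimensional.of_injective f hf
  · -- range closed
    have hset : ((LinearMap.range (A : Hsp e →ₗ[ℂ] Hsp d) : Submodule ℂ (Hsp d)) : Set (Hsp d)) =
        ⋂ i ∈ S, (lpProj d i) ⁻¹' ((LinearMap.range ((T i) : EuclideanSpace ℂ (Fin (e i)) →ₗ[ℂ]
          EuclideanSpace ℂ (Fin (d i))) : Submodule ℂ _) : Set _) := by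
      ext y
      simp only [SetLike.mem_coe, hmem, Set.mem_iInter, Set.mem_preimage, LinearMap.mem_range,
        ContinuousLinearMap.coe_coe]
      rfl
    rw [hset]
    apply isClosed_biInter
    intro i _
    exact (Submodule.closed_of_finiteDimensional _).preimage (lpProj d i).continuous
  · -- cokernel finite dimensional
    let φ : Hsp d →ₗ[ℂ] (∀ i : S, (EuclideanSpace ℂ (Fin (d i.1)) ⧸
        LinearMap.range ((T i.1) : EuclideanSpace ℂ (Fin (e i.1)) →ₗ[ℂ]
          EuclideanSpace ℂ (Fin (d i.1))))) :=
      { toFun := fun y => fun i => Submodule.Quotient.mk ((y : ∀ j, EuclideanSpace ℂ (Fin (d j))) i.1)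
        map_add' := fun x y => by funext i; simp [lp.coeFn_add]
        map_smul' := fun c x => by funext i; simp [lp.coeFn_smul] }
    have hker : LinearMap.range (A : Hsp e →ₗ[ℂ] Hsp d) = LinearMap.ker φ := by
      ext y
      rw [hmem]
      simp only [LinearMap.mem_ker, φ]
      constructor
      · intro hy
        funext i
        simp only [LinearMap.coe_mk, AddHom.coe_mk, Pi.zero_apply]
        rw [Submodule.Quotient.mk_eq_zero]
        obtain ⟨v, hv⟩ := hy i.1 i.2
        exact ⟨v, hv⟩
      · intro hy i hi
        have := congrFun hy ⟨i, hi⟩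
        simp only [LinearMap.coe_mk, AddHom.coe_mk, Pi.zero_apply] at this
        rw [Submodule.Quotient.mk_eq_zero] at this
        obtain ⟨v, hv⟩ := this
        exact ⟨v, hv⟩
    let ψ := (LinearMap.range (A : Hsp e →ₗ[ℂ] Hsp d)).liftQ φ (le_of_eq hker)
    have hψ : Function.Injective ψ := by
      rw [← LinearMap.ker_eq_bot]
      exact Submodule.ker_liftQ_eq_bot' _ φ hker
    exact FiniteDimensional.of_injective ψ hψ
end

section
/- Let ι be a countable index type, d, e : ι → ℕ, T i : EuclideanSpace ℂ (Fin (e i)) →L[ℂ] EuclideanSpace ℂ (Fin (d i)) a family with sup_i ‖T i‖ < ∞, and A : H(e) → H(d) the bounded block-diagonal operator with (A x) i = T i (x i). Suppose there is a finite set S ⊆ ι such that for every i ∉ S the block T i is bijective with sup_{i ∉ S} ‖(T i)⁻¹‖ < ∞. Then the Fredholm index of A is given blockwise by the dimension defects: (finrank ℂ (ker A) : ℤ) − (finrank ℂ (H(d) / range A)) = Σ_{i ∈ S} ((e i : ℤ) − (d i : ℤ)). -/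
open scoped ENNReal

lemma lpProj_apply {α : Type*} (d : α → ℕ) (i : α) (f : Hsp d) :
    lpProj d i f = f i := rfl

lemma coord_sum_single {α : Type*} [DecidableEq α] {d : α → ℕ} (S : Finset α)
    (w : ∀ i, EuclideanSpace ℂ (Fin (d i))) (j : α) :
    ((∑ i ∈ S, lp.single 2 i (w i) : Hsp d) : ∀ i, EuclideanSpace ℂ (Fin (d i))) j
      = if j ∈ S then w j else 0 := by
  rw [lp.coeFn_sum, Finset.sum_apply]
  by_cases hj : j ∈ S
  · rw [if_pos hj, Finset.sum_eq_single_of_mem j hj]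
    · exact lp.single_apply_self (E := fun i => EuclideanSpace ℂ (Fin (d i))) 2 j (w j)
    · intro b _ hb
      exact lp.single_apply_ne (E := fun i => EuclideanSpace ℂ (Fin (d i))) 2 b (w b) hb.symm
  · rw [if_neg hj]
    apply Finset.sum_eq_zero
    intro i hi
    exact lp.single_apply_ne (E := fun i => EuclideanSpace ℂ (Fin (d i))) 2 i (w i)
      (fun (h : j = i) => hj (by rw [h]; exact hi))

set_option maxHeartbeats 1000000 in
/-- Index formula for block-diagonal operators: the Fredholm index equals the
sum of the dimension defects of the finitely many non-invertible blocks. -/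
theorem blockDiagonal_index_formula
    {ι : Type*} [Countable ι] (d e : ι → ℕ)
    (T : ∀ i : ι, EuclideanSpace ℂ (Fin (e i)) →L[ℂ] EuclideanSpace ℂ (Fin (d i)))
    (hbdd : BddAbove (Set.range fun i : ι => ‖T i‖))
    (A : Hsp e →L[ℂ] Hsp d)
    (hA : ∀ (x : Hsp e) (i : ι), (A x) i = T i (x i))
    (S : Finset ι)
    (hbij : ∀ i ∉ S, Function.Bijective (T i))
    (hinv : ∃ C : ℝ, ∀ i ∉ S, ∀ v : EuclideanSpace ℂ (Fin (e i)), ‖v‖ ≤ C * ‖T i v‖) :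
    (Module.finrank ℂ (LinearMap.ker (A : Hsp e →ₗ[ℂ] Hsp d)) : ℤ) -
      (Module.finrank ℂ (Hsp d ⧸ LinearMap.range (A : Hsp e →ₗ[ℂ] Hsp d)) : ℤ) =
      ∑ i ∈ S, ((e i : ℤ) - (d i : ℤ)) := by
  classical
  obtain ⟨C, hC⟩ := hinv
  set C' : ℝ := max C 0 with hC'def
  have hC'0 : 0 ≤ C' := le_max_right _ _
  set A' : Hsp e →ₗ[ℂ] Hsp d := (A : Hsp e →ₗ[ℂ] Hsp d) with hA'def
  -- evaluation at a coordinate of zero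
  have hzero : ∀ {α : Type _} {c : α → ℕ} (j : α),
      ((0 : Hsp c) : ∀ i, EuclideanSpace ℂ (Fin (c i))) j = 0 := by
    intro α c j; rw [lp.coeFn_zero]; rfl
  -- ### Kernel side
  have hkermem : ∀ (x : LinearMap.ker A') (i : S),
      ((x : Hsp e) : ∀ i, EuclideanSpace ℂ (Fin (e i))) i.1 ∈
        LinearMap.ker ((T i.1 : EuclideanSpace ℂ (Fin (e i.1)) →ₗ[ℂ]
          EuclideanSpace ℂ (Fin (d i.1)))) := by
    intro x i
    have hx : A (x : Hsp e) = 0 := x.2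
    have h1 := hA (x : Hsp e) i.1
    rw [hx] at h1
    rw [LinearMap.mem_ker, ContinuousLinearMap.coe_coe]
    rw [← h1]
    exact hzero i.1
  let kmap : LinearMap.ker A' →ₗ[ℂ] (∀ i : S,
      LinearMap.ker ((T i.1 : EuclideanSpace ℂ (Fin (e i.1)) →ₗ[ℂ]
        EuclideanSpace ℂ (Fin (d i.1))))) :=
    LinearMap.pi fun i : S => LinearMap.codRestrict _
      ((lpProj e i.1 : Hsp e →ₗ[ℂ] EuclideanSpace ℂ (Fin (e i.1))) ∘ₗ
        (LinearMap.ker A').subtype)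
      (fun x => hkermem x i)
  have hkinj : Function.Injective kmap := by
    rw [injective_iff_map_eq_zero]
    intro x hx
    have hcoord : ∀ j, ((x : Hsp e) : ∀ i, EuclideanSpace ℂ (Fin (e i))) j = 0 := by
      intro j
      by_cases hj : j ∈ S
      · have h2 := congrFun hx ⟨j, hj⟩
        have h3 := congrArg Subtype.val h2
        exact h3
      · have hx0 : A (x : Hsp e) = 0 := x.2
        have h1 := hA (x : Hsp e) j
        rw [hx0] at h1
        have h4 : T j (((x : Hsp e) : ∀ i, EuclideanSpace ℂ (Fin (e i))) j) = 0 := by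
          rw [← h1]; exact hzero j
        apply (hbij j hj).1
        rw [h4, map_zero]
    apply Subtype.ext
    apply lp.ext
    funext j
    simp only [ZeroMemClass.coe_zero, lp.coeFn_zero, Pi.zero_apply]
    exact hcoord j
  have hksurj : Function.Surjective kmap := by
    intro v
    set w : ∀ i, EuclideanSpace ℂ (Fin (e i)) :=
      fun i => if h : i ∈ S then (v ⟨i, h⟩ : EuclideanSpace ℂ (Fin (e i))) else 0 with hw
    set x : Hsp e := ∑ i ∈ S, lp.single 2 i (w i) with hxdef
    have hxcoord : ∀ j, (x : ∀ i, EuclideanSpace ℂ (Fin (e i))) j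
        = if j ∈ S then w j else 0 := fun j => coord_sum_single S w j
    have hxker : x ∈ LinearMap.ker A' := by
      rw [LinearMap.mem_ker]
      show A x = 0
      apply lp.ext
      funext j
      rw [lp.coeFn_zero, Pi.zero_apply, hA x j, hxcoord j]
      by_cases hj : j ∈ S
      · rw [if_pos hj]
        have := (v ⟨j, hj⟩).2
        rw [LinearMap.mem_ker, ContinuousLinearMap.coe_coe] at this
        simpa [hw, dif_pos hj] using this
      · rw [if_neg hj, map_zero]
    refine ⟨⟨x, hxker⟩, ?_⟩
    funext i
    apply Subtype.ext
    have : kmap ⟨x, hxker⟩ i = ⟨(x : ∀ i, EuclideanSpace ℂ (Fin (e i))) i.1, hkermem ⟨x, hxker⟩ i⟩ := rfl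
    rw [this]
    simp only [hxcoord i.1, if_pos i.2, hw, dif_pos i.2]
  have hkerrank : Module.finrank ℂ (LinearMap.ker A')
      = ∑ i ∈ S, Module.finrank ℂ (LinearMap.ker
          ((T i : EuclideanSpace ℂ (Fin (e i)) →ₗ[ℂ] EuclideanSpace ℂ (Fin (d i))))) := by
    rw [(LinearEquiv.ofBijective kmap ⟨hkinj, hksurj⟩).finrank_eq,
      Module.finrank_pi_fintype]
    exact Finset.sum_coe_sort S (fun i => Module.finrank ℂ (LinearMap.ker
      ((T i : EuclideanSpace ℂ (Fin (e i)) →ₗ[ℂ] EuclideanSpace ℂ (Fin (d i))))))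
  -- ### Cokernel side
  set Q : ∀ i : ι, Submodule ℂ (EuclideanSpace ℂ (Fin (d i))) :=
    fun i => LinearMap.range ((T i : EuclideanSpace ℂ (Fin (e i)) →ₗ[ℂ]
      EuclideanSpace ℂ (Fin (d i)))) with hQdef
  let qmap : Hsp d →ₗ[ℂ] (∀ i : S, EuclideanSpace ℂ (Fin (d i.1)) ⧸ Q i.1) :=
    LinearMap.pi fun i : S => (Q i.1).mkQ ∘ₗ
      (lpProj d i.1 : Hsp d →ₗ[ℂ] EuclideanSpace ℂ (Fin (d i.1)))
  have hqsurj : Function.Surjective qmap := by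
    intro q
    choose r hr using fun i : S => Submodule.Quotient.mk_surjective (Q i.1) (q i)
    set w : ∀ i, EuclideanSpace ℂ (Fin (d i)) :=
      fun i => if h : i ∈ S then r ⟨i, h⟩ else 0 with hw
    refine ⟨∑ i ∈ S, lp.single 2 i (w i), ?_⟩
    funext i
    have hc := coord_sum_single S w i.1
    have : qmap (∑ j ∈ S, lp.single 2 j (w j)) i
        = Submodule.Quotient.mk (((∑ j ∈ S, lp.single 2 j (w j) : Hsp d) :
            ∀ k, EuclideanSpace ℂ (Fin (d k))) i.1) := rfl
    rw [this, hc, if_pos i.2]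
    simp only [hw, dif_pos i.2]
    exact hr i
  have hqker : LinearMap.ker qmap = LinearMap.range A' := by
    apply le_antisymm
    · intro y hy
      have hyS : ∀ i, i ∈ S → ∃ z, T i z = (y : ∀ k, EuclideanSpace ℂ (Fin (d k))) i := by
        intro i h
        have h1 := congrFun (LinearMap.mem_ker.1 hy) ⟨i, h⟩
        have h2 : (y : ∀ k, EuclideanSpace ℂ (Fin (d k))) i ∈ Q i := by
          rw [← Submodule.Quotient.mk_eq_zero]
          simpa [qmap, lpProj_apply] using h1
        obtain ⟨z, hz⟩ := h2
        exact ⟨z, hz⟩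
      choose zS hzS using hyS
      set ut : ∀ i, EuclideanSpace ℂ (Fin (e i)) :=
        fun i => if h : i ∈ S then 0
          else Function.invFun (T i) ((y : ∀ k, EuclideanSpace ℂ (Fin (d k))) i) with hut
      have hTut : ∀ i ∉ S, T i (ut i) = (y : ∀ k, EuclideanSpace ℂ (Fin (d k))) i := by
        intro i h
        simp only [hut, dif_neg h]
        exact Function.invFun_eq ((hbij i h).2 _)
      have hpow : ∀ r : ℝ, r ^ ((2 : ℝ≥0∞)).toReal = r ^ (2 : ℕ) := by
        intro r
        rw [show ((2 : ℝ≥0∞)).toReal = ((2 : ℕ) : ℝ) by norm_num, Real.rpow_natCast]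
      have hutmem : Memℓp ut 2 := by
        apply memℓp_gen
        have hy2 : Summable (fun i => ‖(y : ∀ k, EuclideanSpace ℂ (Fin (d k))) i‖ ^ (2 : ℕ)) := by
          have := (lp.memℓp y).summable (p := 2) (by norm_num)
          simpa only [hpow] using this
        simp only [hpow]
        apply Summable.of_nonneg_of_le (fun i => by positivity)
          (fun i => ?_) (hy2.mul_left (C' ^ 2))
        by_cases h : i ∈ S
        · have h0 : ‖ut i‖ ^ (2:ℕ) = 0 := by simp [hut, h]
          rw [h0]
          positivity
        · have hb : ‖ut i‖ ≤ C' * ‖(y : ∀ k, EuclideanSpace ℂ (Fin (d k))) i‖ := by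
            have h5 := hC i h (ut i)
            rw [hTut i h] at h5
            exact h5.trans (mul_le_mul_of_nonneg_right (le_max_left _ _) (norm_nonneg _))
          calc ‖ut i‖ ^ (2:ℕ) ≤ (C' * ‖(y : ∀ k, EuclideanSpace ℂ (Fin (d k))) i‖) ^ (2:ℕ) :=
                pow_le_pow_left₀ (norm_nonneg _) hb 2
            _ = C' ^ 2 * ‖(y : ∀ k, EuclideanSpace ℂ (Fin (d k))) i‖ ^ (2:ℕ) := by ring
      set ws : ∀ i, EuclideanSpace ℂ (Fin (e i)) :=
        fun i => if h : i ∈ S then zS i h else 0 with hws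
      set x : Hsp e := (⟨ut, hutmem⟩ : Hsp e) + ∑ i ∈ S, lp.single 2 i (ws i) with hx
      refine ⟨x, ?_⟩
      show A x = y
      apply lp.ext
      funext j
      have hxc : (x : ∀ i, EuclideanSpace ℂ (Fin (e i))) j
          = ut j + (if j ∈ S then ws j else 0) := by
        rw [hx, lp.coeFn_add, Pi.add_apply, coord_sum_single S ws j]
      rw [hA x j, hxc]
      by_cases hj : j ∈ S
      · rw [if_pos hj]
        have h6 : ut j = 0 := by simp [hut, hj]
        have h7 : ws j = zS j hj := by simp [hws, hj]
        rw [h6, h7, zero_add]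
        exact hzS j hj
      · rw [if_neg hj, add_zero]
        exact hTut j hj
    · rintro y ⟨x, rfl⟩
      rw [LinearMap.mem_ker]
      funext i
      have h1 : qmap (A' x) i = Submodule.Quotient.mk ((A x : ∀ k,
          EuclideanSpace ℂ (Fin (d k))) i.1) := rfl
      rw [h1, Pi.zero_apply, Submodule.Quotient.mk_eq_zero, hA x i.1]
      exact ⟨(x : ∀ k, EuclideanSpace ℂ (Fin (e k))) i.1, rfl⟩
  have hcokerrank : Module.finrank ℂ (Hsp d ⧸ LinearMap.range A')
      = ∑ i ∈ S, Module.finrank ℂ (EuclideanSpace ℂ (Fin (d i)) ⧸ Q i) := by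
    rw [((Submodule.quotEquivOfEq _ _ hqker.symm).trans
        (qmap.quotKerEquivOfSurjective hqsurj)).finrank_eq,
      Module.finrank_pi_fintype]
    exact Finset.sum_coe_sort S (fun i => Module.finrank ℂ
      (EuclideanSpace ℂ (Fin (d i)) ⧸ Q i))
  -- ### Conclusion
  rw [hkerrank, hcokerrank]
  push_cast
  rw [← Finset.sum_sub_distrib]
  apply Finset.sum_congr rfl
  intro i _
  have h1 := LinearMap.finrank_range_add_finrank_ker
    ((T i : EuclideanSpace ℂ (Fin (e i)) →ₗ[ℂ] EuclideanSpace ℂ (Fin (d i))))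
  rw [finrank_euclideanSpace_fin] at h1
  have hQi : LinearMap.range
      ((T i : EuclideanSpace ℂ (Fin (e i)) →ₗ[ℂ] EuclideanSpace ℂ (Fin (d i)))) = Q i := rfl
  rw [hQi] at h1
  have h2 := Submodule.finrank_quotient_add_finrank (Q i)
  rw [finrank_euclideanSpace_fin] at h2
  omega
end

section
/- Let ι and κ be countable index types, d : ι → ℕ, e : κ → ℕ, μ : ι → ℝ with μ i > 0 for all i, and ν : κ → ℝ with ν j > 0 for all j. Let a, b be two families of matrices a i j, b i j ∈ Matrix (Fin (d i)) (Fin (e j)) ℂ, both vanishing outside a common finite set F ⊆ ι × κ (band-limited symbols). Let A_a : H(e) → H(d) be the (finite-rank, hence bounded) operator with (A_a x) i = Σ_j (μ i) (ν j) • (a i j applied to x j), and define A_b analogously. If A_a = A_b as operators, then a i j = b i j for all i ∈ ι and j ∈ κ. -/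
open scoped ENNReal

/-- Uniqueness of band-limited symbol recovery: two band-limited matrix symbols
inducing the same weighted block operator (with strictly positive weights)
coincide. -/
theorem bandlimited_symbol_uniqueness
    {ι κ : Type*} [Countable ι] [Countable κ]
    (d : ι → ℕ) (e : κ → ℕ)
    (μ : ι → ℝ) (ν : κ → ℝ) (hμ : ∀ i, 0 < μ i) (hν : ∀ j, 0 < ν j)
    (a b : ∀ (i : ι) (j : κ), Matrix (Fin (d i)) (Fin (e j)) ℂ)
    (F : Finset (ι × κ))
    (ha : ∀ i j, (i, j) ∉ F → a i j = 0) (hb : ∀ i j, (i, j) ∉ F → b i j = 0)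
    (A B : Hsp e →L[ℂ] Hsp d)
    (hA : ∀ (x : Hsp e) (i : ι),
      (A x) i = ∑' j : κ, (μ i * ν j) • Matrix.toEuclideanLin (a i j) (x j))
    (hB : ∀ (x : Hsp e) (i : ι),
      (B x) i = ∑' j : κ, (μ i * ν j) • Matrix.toEuclideanLin (b i j) (x j))
    (hAB : A = B) :
    ∀ i j, a i j = b i j := by
  classical
  intro i j
  have key : ∀ v : EuclideanSpace ℂ (Fin (e j)),
      Matrix.toEuclideanLin (a i j) v = Matrix.toEuclideanLin (b i j) v := by
    intro v
    have hx : ∀ j' : κ, j' ≠ j →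
        ((lpIncl e j v : Hsp e) : ∀ k, EuclideanSpace ℂ (Fin (e k))) j' = 0 := by
      intro j' hj'
      exact lp.single_apply_ne (E := fun k => EuclideanSpace ℂ (Fin (e k))) 2 j v hj'
    have hxj : ((lpIncl e j v : Hsp e) : ∀ k, EuclideanSpace ℂ (Fin (e k))) j = v :=
      lp.single_apply_self (E := fun k => EuclideanSpace ℂ (Fin (e k))) 2 j v
    have collapse : ∀ c : ∀ (i : ι) (j : κ), Matrix (Fin (d i)) (Fin (e j)) ℂ,
        (∑' j' : κ, (μ i * ν j') •
          Matrix.toEuclideanLin (c i j') ((lpIncl e j v : Hsp e) j'))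
          = (μ i * ν j) • Matrix.toEuclideanLin (c i j) v := by
      intro c
      rw [tsum_eq_single j]
      · rw [hxj]
      · intro j' hj'
        rw [hx j' hj']
        simp
    have hAx := hA (lpIncl e j v) i
    have hBx := hB (lpIncl e j v) i
    rw [collapse a] at hAx
    rw [collapse b] at hBx
    rw [hAB, hBx] at hAx
    have hne : (μ i * ν j) ≠ 0 := ne_of_gt (mul_pos (hμ i) (hν j))
    exact smul_right_injective _ hne hAx.symm
  have := LinearMap.ext key
  exact (Matrix.toEuclideanLin).injective this
end

section
/- Let E and G be normed spaces over ℝ, F : E → G a map, a ∈ E, and L > 0 a constant such that ‖F u − F v‖ ≥ L ‖u − v‖ for all u, v ∈ E. Let δ ≥ 0 and α ≥ 0, let Σδ ∈ G satisfy ‖Σδ − F a‖ ≤ δ, and let a' ∈ E satisfy the Tikhonov minimality inequality ‖F a' − Σδ‖² + α ‖a'‖² ≤ ‖F a − Σδ‖² + α ‖a‖². Then ‖a' − a‖ ≤ (2δ + √α · ‖a‖) / L. In particular, if α = δ², then ‖a' − a‖ ≤ (2 + ‖a‖) δ / L. -/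
/-- Abstract Tikhonov stability estimate: if the forward map has a lower
Lipschitz constant `L` and `a'` satisfies the Tikhonov minimality inequality
against the true symbol `a`, then the reconstruction error is bounded by
`(2δ + √α‖a‖)/L`; choosing `α = δ²` gives an `O(δ)` bound. -/
theorem tikhonov_stability
    {E G : Type*} [NormedAddCommGroup E] [NormedSpace ℝ E]
    [NormedAddCommGroup G] [NormedSpace ℝ G]
    (F : E → G) (a : E) (L : ℝ) (hL : 0 < L)
    (hlip : ∀ u v : E, L * ‖u - v‖ ≤ ‖F u - F v‖)
    (δ α : ℝ) (hδ : 0 ≤ δ) (hα : 0 ≤ α)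
    (Sδ : G) (hnoise : ‖Sδ - F a‖ ≤ δ)
    (a' : E)
    (hmin : ‖F a' - Sδ‖ ^ 2 + α * ‖a'‖ ^ 2 ≤ ‖F a - Sδ‖ ^ 2 + α * ‖a‖ ^ 2) :
    ‖a' - a‖ ≤ (2 * δ + Real.sqrt α * ‖a‖) / L ∧
    (α = δ ^ 2 → ‖a' - a‖ ≤ (2 + ‖a‖) * δ / L) := by
  have hsq : Real.sqrt α ^ 2 = α := Real.sq_sqrt hα
  have hsnn : 0 ≤ Real.sqrt α := Real.sqrt_nonneg α
  have hFa : ‖F a - Sδ‖ ≤ δ := by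
    rw [← norm_neg]; simpa [neg_sub] using hnoise
  have h1 : ‖F a' - Sδ‖ ^ 2 ≤ (δ + Real.sqrt α * ‖a‖) ^ 2 := by
    have h2 : ‖F a' - Sδ‖ ^ 2 ≤ δ ^ 2 + α * ‖a‖ ^ 2 := by
      nlinarith [norm_nonneg a', sq_nonneg ‖a'‖, mul_nonneg hα (sq_nonneg ‖a'‖),
        sq_le_sq' (by linarith [norm_nonneg (F a - Sδ)] : -δ ≤ ‖F a - Sδ‖) hFa]
    nlinarith [mul_nonneg (mul_nonneg hδ hsnn) (norm_nonneg a)]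
  have h3 : ‖F a' - Sδ‖ ≤ δ + Real.sqrt α * ‖a‖ := by
    nlinarith [norm_nonneg (F a' - Sδ), mul_nonneg hsnn (norm_nonneg a)]
  have h4 : ‖F a' - F a‖ ≤ 2 * δ + Real.sqrt α * ‖a‖ := by
    calc ‖F a' - F a‖ ≤ ‖F a' - Sδ‖ + ‖Sδ - F a‖ := norm_sub_le_norm_sub_add_norm_sub _ _ _
      _ ≤ (δ + Real.sqrt α * ‖a‖) + δ := add_le_add h3 hnoise
      _ = 2 * δ + Real.sqrt α * ‖a‖ := by ring
  have h5 : L * ‖a' - a‖ ≤ 2 * δ + Real.sqrt α * ‖a‖ := (hlip a' a).trans h4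
  have hmain : ‖a' - a‖ ≤ (2 * δ + Real.sqrt α * ‖a‖) / L := by
    rw [le_div_iff₀ hL]; linarith [h5]
  refine ⟨hmain, fun hαδ => ?_⟩
  have : Real.sqrt α = δ := by rw [hαδ, Real.sqrt_sq hδ]
  calc ‖a' - a‖ ≤ (2 * δ + Real.sqrt α * ‖a‖) / L := hmain
    _ = (2 + ‖a‖) * δ / L := by rw [this]; ring
end
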